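/- arXiv:1909.07681 — 4 statements merged into one kernel-verified Lean document; each statement's English description precedes it below -/
import Mathlib

section
/- Let E and F be Banach lattices and let S, T : E → F be continuous linear operators with 0 ≤ S ≤ T (i.e., S x ≥ 0 and T x − S x ≥ 0 for every x ≥ 0). If T is an unbounded Dunford-Pettis operator, then S is an unbounded Dunford-Pettis operator. -/
open Filter Topology

/-- A sequence in a Banach lattice is uaw-null if `|x n| ⊓ u` converges weakly to `0`
for every `u ≥ 0`. -/
def UawNullSeq {E : Type*} [NormedAddCommGroup E] [Lattice E] [HasSolidNorm E] [IsOrderedAddMonoid E] [NormedSpace ℝ E]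
    (x : ℕ → E) : Prop :=
  ∀ u : E, 0 ≤ u → ∀ f : E →L[ℝ] ℝ,
    Tendsto (fun n => f (|x n| ⊓ u)) atTop (𝓝 0)

/-- A sequence in a Banach lattice is un-null if `‖|y n| ⊓ v‖ → 0` for every `v ≥ 0`. -/
def UnNullSeq {F : Type*} [NormedAddCommGroup F] [Lattice F] [HasSolidNorm F] [IsOrderedAddMonoid F] [NormedSpace ℝ F]
    (y : ℕ → F) : Prop :=
  ∀ v : F, 0 ≤ v → Tendsto (fun n => ‖|y n| ⊓ v‖) atTop (𝓝 0)

/-- A sequence is weakly null if `f (x n) → 0` for every continuous linear functional `f`. -/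
def WeaklyNullSeq {E : Type*} [NormedAddCommGroup E] [NormedSpace ℝ E]
    (x : ℕ → E) : Prop :=
  ∀ f : E →L[ℝ] ℝ, Tendsto (fun n => f (x n)) atTop (𝓝 0)

/-- σ-unbounded Dunford-Pettis operator. -/
def SigmaUDP {E F : Type*} [NormedAddCommGroup E] [Lattice E] [HasSolidNorm E] [IsOrderedAddMonoid E] [NormedSpace ℝ E]
    [NormedAddCommGroup F] [Lattice F] [HasSolidNorm F] [IsOrderedAddMonoid F] [NormedSpace ℝ F] (T : E →L[ℝ] F) : Prop :=
  ∀ x : ℕ → E, (∃ C : ℝ, ∀ n, ‖x n‖ ≤ C) → UawNullSeq x → UnNullSeq fun n => T (x n)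

/-- Dunford-Pettis operator: maps weakly null sequences to norm null sequences. -/
def DunfordPettis {E F : Type*} [NormedAddCommGroup E] [NormedSpace ℝ E]
    [NormedAddCommGroup F] [NormedSpace ℝ F] (T : E →L[ℝ] F) : Prop :=
  ∀ x : ℕ → E, WeaklyNullSeq x → Tendsto (fun n => ‖T (x n)‖) atTop (𝓝 0)

/-- A net (indexed by a directed preorder) is uaw-null. -/
def UawNullNet {E : Type*} [NormedAddCommGroup E] [Lattice E] [HasSolidNorm E] [IsOrderedAddMonoid E] [NormedSpace ℝ E]
    {ι : Type} [Preorder ι] (x : ι → E) : Prop :=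
  ∀ u : E, 0 ≤ u → ∀ f : E →L[ℝ] ℝ,
    Tendsto (fun i => f (|x i| ⊓ u)) atTop (𝓝 0)

/-- A net (indexed by a directed preorder) is un-null. -/
def UnNullNet {F : Type*} [NormedAddCommGroup F] [Lattice F] [HasSolidNorm F] [IsOrderedAddMonoid F] [NormedSpace ℝ F]
    {ι : Type} [Preorder ι] (y : ι → F) : Prop :=
  ∀ v : F, 0 ≤ v → Tendsto (fun i => ‖|y i| ⊓ v‖) atTop (𝓝 0)

/-- Unbounded Dunford-Pettis operator: maps norm bounded uaw-null nets to un-null nets. -/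
def UDP {E F : Type*} [NormedAddCommGroup E] [Lattice E] [HasSolidNorm E] [IsOrderedAddMonoid E] [NormedSpace ℝ E]
    [NormedAddCommGroup F] [Lattice F] [HasSolidNorm F] [IsOrderedAddMonoid F] [NormedSpace ℝ F] (T : E →L[ℝ] F) : Prop :=
  ∀ (ι : Type) [Preorder ι] [IsDirected ι (· ≤ ·)] [Nonempty ι] (x : ι → E),
    (∃ C : ℝ, ∀ i, ‖x i‖ ≤ C) → UawNullNet x → UnNullNet fun i => T (x i)

/-- uaw-continuous operator: maps norm bounded uaw-null nets to uaw-null nets. -/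
def UawContinuous {E F : Type*} [NormedAddCommGroup E] [Lattice E] [HasSolidNorm E] [IsOrderedAddMonoid E] [NormedSpace ℝ E]
    [NormedAddCommGroup F] [Lattice F] [HasSolidNorm F] [IsOrderedAddMonoid F] [NormedSpace ℝ F] (T : E →L[ℝ] F) : Prop :=
  ∀ (ι : Type) [Preorder ι] [IsDirected ι (· ≤ ·)] [Nonempty ι] (x : ι → E),
    (∃ C : ℝ, ∀ i, ‖x i‖ ≤ C) → UawNullNet x → UawNullNet fun i => T (x i)

/-- A Banach lattice has order continuous norm if every decreasing net with infimum `0`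
converges to `0` in norm. -/
def OrderContinuousNorm (E : Type*) [NormedAddCommGroup E] [Lattice E] [HasSolidNorm E] [IsOrderedAddMonoid E] : Prop :=
  ∀ (ι : Type) [Preorder ι] [IsDirected ι (· ≤ ·)] [Nonempty ι] (x : ι → E),
    Antitone x → IsGLB (Set.range x) 0 → Tendsto (fun i => ‖x i‖) atTop (𝓝 0)

/-- The norm dual of `E` has order continuous norm. -/
def DualOrderContinuousNorm (E : Type*) [NormedAddCommGroup E] [Lattice E] [HasSolidNorm E] [IsOrderedAddMonoid E] [NormedSpace ℝ E] :
    Prop :=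
  ∀ (ι : Type) [Preorder ι] [IsDirected ι (· ≤ ·)] [Nonempty ι] (f : ι → E →L[ℝ] ℝ),
    (∀ i, ∀ x : E, 0 ≤ x → 0 ≤ f i x) →
    (∀ i j, i ≤ j → ∀ x : E, 0 ≤ x → f j x ≤ f i x) →
    (∀ x : E, 0 ≤ x → IsGLB (Set.range fun i => f i x) 0) →
    Tendsto (fun i => ‖f i‖) atTop (𝓝 0)

/-- Strong order unit. -/
def HasStrongOrderUnit (F : Type*) [NormedAddCommGroup F] [Lattice F] [HasSolidNorm F] [IsOrderedAddMonoid F] : Prop :=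
  ∃ e : F, 0 ≤ e ∧ ∀ y : F, ∃ n : ℕ, |y| ≤ n • e

/-- AM-space. -/
def IsAMSpace (E : Type*) [NormedAddCommGroup E] [Lattice E] [HasSolidNorm E] [IsOrderedAddMonoid E] : Prop :=
  ∀ x y : E, 0 ≤ x → 0 ≤ y → ‖x ⊔ y‖ = max ‖x‖ ‖y‖

/-- An atom of a Banach lattice. -/
def IsLatticeAtom {E : Type*} [NormedAddCommGroup E] [Lattice E] [HasSolidNorm E] [IsOrderedAddMonoid E] [NormedSpace ℝ E] (a : E) :
    Prop :=
  0 < a ∧ ∀ x : E, 0 ≤ x → x ≤ a → ∃ c : ℝ, x = c • a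

/-- An atomic Banach lattice: below every `x > 0` there is an atom. -/
def IsAtomicLattice (E : Type*) [NormedAddCommGroup E] [Lattice E] [HasSolidNorm E] [IsOrderedAddMonoid E] [NormedSpace ℝ E] : Prop :=
  ∀ x : E, 0 < x → ∃ a : E, IsLatticeAtom a ∧ a ≤ x

/-- Relatively sequentially un-compact set. -/
def RelSeqUnCompact {F : Type*} [NormedAddCommGroup F] [Lattice F] [HasSolidNorm F] [IsOrderedAddMonoid F] [NormedSpace ℝ F]
    (A : Set F) : Prop :=
  ∀ y : ℕ → F, (∀ n, y n ∈ A) →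
    ∃ (z : F) (φ : ℕ → ℕ), StrictMono φ ∧
      ∀ v : F, 0 ≤ v → Tendsto (fun k => ‖|y (φ k) - z| ⊓ v‖) atTop (𝓝 0)

/-- Sequentially un-compact operator. -/
def SeqUnCompactOp {E F : Type*} [NormedAddCommGroup E] [Lattice E] [HasSolidNorm E] [IsOrderedAddMonoid E] [NormedSpace ℝ E]
    [NormedAddCommGroup F] [Lattice F] [HasSolidNorm F] [IsOrderedAddMonoid F] [NormedSpace ℝ F] (S : E →L[ℝ] F) : Prop :=
  RelSeqUnCompact (S '' Metric.closedBall 0 1)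

/-- M-weakly compact operator. -/
def MWeaklyCompact {E F : Type*} [NormedAddCommGroup E] [Lattice E] [HasSolidNorm E] [IsOrderedAddMonoid E] [NormedSpace ℝ E]
    [NormedAddCommGroup F] [NormedSpace ℝ F] (T : E →L[ℝ] F) : Prop :=
  ∀ x : ℕ → E, (∃ C : ℝ, ∀ n, ‖x n‖ ≤ C) →
    (∀ i j, i ≠ j → |x i| ⊓ |x j| = 0) →
    Tendsto (fun n => ‖T (x n)‖) atTop (𝓝 0)

/-- L-weakly compact operator. -/
def LWeaklyCompact {E F : Type*} [NormedAddCommGroup E] [NormedSpace ℝ E]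
    [NormedAddCommGroup F] [Lattice F] [HasSolidNorm F] [IsOrderedAddMonoid F] [NormedSpace ℝ F] (T : E →L[ℝ] F) : Prop :=
  ∀ y : ℕ → F, (∀ n, ∃ a ∈ T '' Metric.closedBall 0 1, |y n| ≤ |a|) →
    (∀ i j, i ≠ j → |y i| ⊓ |y j| = 0) →
    Tendsto (fun n => ‖y n‖) atTop (𝓝 0)

/-- Relatively weakly compact subset of a normed space. -/
def RelWeaklyCompact {F : Type*} [NormedAddCommGroup F] [NormedSpace ℝ F] (S : Set F) :
    Prop :=
  IsCompact (closure ((toWeakSpace ℝ F) '' S))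

/-- weak Dunford-Pettis operator. -/
def WeakDunfordPettis {E F : Type*} [NormedAddCommGroup E] [NormedSpace ℝ E]
    [NormedAddCommGroup F] [NormedSpace ℝ F] (T : E →L[ℝ] F) : Prop :=
  ∀ x : ℕ → E, WeaklyNullSeq x →
    ∀ f : ℕ → (F →L[ℝ] ℝ),
      (∀ G : (F →L[ℝ] ℝ) →L[ℝ] ℝ, Tendsto (fun n => G (f n)) atTop (𝓝 0)) →
      Tendsto (fun n => f n (T (x n))) atTop (𝓝 0)

/-- Dedekind complete lattice. -/
def DedekindComplete (E : Type*) [Lattice E] : Prop :=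
  ∀ s : Set E, s.Nonempty → BddAbove s → ∃ a, IsLUB s a

/-- Dedekind σ-complete lattice. -/
def DedekindSigmaComplete (E : Type*) [Lattice E] : Prop :=
  ∀ s : Set E, s.Countable → s.Nonempty → BddAbove s → ∃ a, IsLUB s a

/-- a positive operator dominated by an unbounded Dunford-Pettis operator
is unbounded Dunford-Pettis. -/
theorem dominated_by_uDP_is_uDP
    {E F : Type*} [NormedAddCommGroup E] [Lattice E] [HasSolidNorm E] [IsOrderedAddMonoid E] [NormedSpace ℝ E] [CompleteSpace E]
    [NormedAddCommGroup F] [Lattice F] [HasSolidNorm F] [IsOrderedAddMonoid F] [NormedSpace ℝ F] [CompleteSpace F]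
    (S T : E →L[ℝ] F)
    (hS : ∀ x : E, 0 ≤ x → 0 ≤ S x)
    (hST : ∀ x : E, 0 ≤ x → S x ≤ T x)
    (hT : UDP T) : UDP S := by
  intro ι _ _ _ x ⟨C, hC⟩ hx v hv
  have hSmono : ∀ a b : E, a ≤ b → S a ≤ S b := fun a b hab => by
    have := hS (b - a) (sub_nonneg.mpr hab)
    simpa [map_sub, sub_nonneg] using this
  have key := hT ι (fun i => |x i|) ⟨C, fun i => by rw [norm_abs_eq_norm]; exact hC i⟩
    (fun u hu f => by simpa [abs_abs] using hx u hu f) v hv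
  refine squeeze_zero (fun i => norm_nonneg _) (fun i => ?_) key
  set w : F := T |x i| with hw
  have hSx : |S (x i)| ≤ w := by
    refine le_trans (abs_le'.mpr ⟨hSmono _ _ (le_abs_self _), ?_⟩)
      (hST _ (abs_nonneg _))
    have := hSmono (-(x i)) |x i| (neg_le_abs _)
    simpa [map_neg] using this
  have h1 : |(|S (x i)| ⊓ v)| ≤ |(|w| ⊓ v)| := by
    rw [abs_of_nonneg (le_inf (abs_nonneg _) hv),
      abs_of_nonneg (le_inf (abs_nonneg _) hv)]
    exact inf_le_inf_right v (hSx.trans (le_abs_self _))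
  exact HasSolidNorm.solid h1
end

section
/- Let E and F be Banach lattices and let S, T : E → F be continuous linear operators with 0 ≤ S ≤ T (i.e., S x ≥ 0 and T x − S x ≥ 0 for every x ≥ 0). If T is uaw-continuous (maps norm-bounded uaw-null nets to uaw-null nets), then S is uaw-continuous. -/
open Filter Topology

section Aux

variable {E : Type*} [NormedAddCommGroup E] [Lattice E] [HasSolidNorm E] [IsOrderedAddMonoid E] [NormedSpace ℝ E]

/-- Riesz decomposition property. -/
lemma my_riesz_decomp {x y z : E} (hz : 0 ≤ z) (hx : 0 ≤ x) (hy : 0 ≤ y)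
    (hzxy : z ≤ x + y) :
    ∃ z₁ z₂ : E, z = z₁ + z₂ ∧ 0 ≤ z₁ ∧ z₁ ≤ x ∧ 0 ≤ z₂ ∧ z₂ ≤ y := by
  refine ⟨z ⊓ x, z - z ⊓ x, by abel, le_inf hz hx, inf_le_right, ?_, ?_⟩
  · simpa using inf_le_left (a := z) (b := x)
  · have h1 : z - z ⊓ x = (z - z) ⊔ (z - x) := by
      rw [← sub_inf]
    rw [h1, sub_self]
    exact sup_le hy (sub_le_iff_le_add'.2 hzxy)

/-- Every continuous functional on a Banach lattice is dominated by a positive one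
that agrees with its Riesz positive part. -/
lemma exists_pos_dominating (f : E →L[ℝ] ℝ) :
    ∃ g : E →L[ℝ] ℝ, (∀ x : E, 0 ≤ x → 0 ≤ g x) ∧ (∀ x : E, 0 ≤ x → f x ≤ g x) := by
  classical
  set p : E → ℝ := fun x => sSup ((fun y => f y) '' Set.Icc 0 x) with hp
  have hmem0 : ∀ x : E, 0 ≤ x → (0 : ℝ) ∈ (fun y => f y) '' Set.Icc 0 x := by
    intro x hx
    exact ⟨0, ⟨le_refl _, hx⟩, by simp⟩
  have hne : ∀ x : E, 0 ≤ x → ((fun y => f y) '' Set.Icc 0 x).Nonempty :=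
    fun x hx => ⟨0, hmem0 x hx⟩
  have hub : ∀ x : E, 0 ≤ x → ∀ a ∈ (fun y => f y) '' Set.Icc 0 x, a ≤ ‖f‖ * ‖x‖ := by
    rintro x hx a ⟨y, ⟨hy0, hyx⟩, rfl⟩
    have habs : |y| ≤ |x| := by
      rw [abs_of_nonneg hy0, abs_of_nonneg hx]; exact hyx
    have hn : ‖y‖ ≤ ‖x‖ := norm_le_norm_of_abs_le_abs habs
    calc f y ≤ |f y| := le_abs_self _
      _ = ‖f y‖ := (Real.norm_eq_abs _).symm
      _ ≤ ‖f‖ * ‖y‖ := f.le_opNorm y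
      _ ≤ ‖f‖ * ‖x‖ := by
          exact mul_le_mul_of_nonneg_left hn (norm_nonneg f)
  have hbdd : ∀ x : E, 0 ≤ x → BddAbove ((fun y => f y) '' Set.Icc 0 x) :=
    fun x hx => ⟨‖f‖ * ‖x‖, fun a ha => hub x hx a ha⟩
  have hp_nonneg : ∀ x : E, 0 ≤ x → 0 ≤ p x :=
    fun x hx => le_csSup (hbdd x hx) (hmem0 x hx)
  have hf_le_p : ∀ x : E, 0 ≤ x → f x ≤ p x :=
    fun x hx => le_csSup (hbdd x hx) ⟨x, ⟨hx, le_refl _⟩, rfl⟩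
  have hp_le : ∀ x : E, 0 ≤ x → p x ≤ ‖f‖ * ‖x‖ :=
    fun x hx => csSup_le (hne x hx) (hub x hx)
  -- additivity on the cone
  have hadd : ∀ x y : E, 0 ≤ x → 0 ≤ y → p (x + y) = p x + p y := by
    intro x y hx hy
    apply le_antisymm
    · apply csSup_le (hne _ (add_nonneg hx hy))
      rintro a ⟨z, ⟨hz0, hzxy⟩, rfl⟩
      obtain ⟨z₁, z₂, hzeq, hz₁0, hz₁x, hz₂0, hz₂y⟩ := my_riesz_decomp hz0 hx hy hzxy
      have h1 : f z₁ ≤ p x := le_csSup (hbdd x hx) ⟨z₁, ⟨hz₁0, hz₁x⟩, rfl⟩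
      have h2 : f z₂ ≤ p y := le_csSup (hbdd y hy) ⟨z₂, ⟨hz₂0, hz₂y⟩, rfl⟩
      have : f z = f z₁ + f z₂ := by rw [hzeq, map_add]
      linarith
    · have key : ∀ a ∈ (fun y => f y) '' Set.Icc 0 x,
          ∀ b ∈ (fun y' => f y') '' Set.Icc 0 y, a + b ≤ p (x + y) := by
        rintro a ⟨z₁, ⟨hz₁0, hz₁x⟩, rfl⟩ b ⟨z₂, ⟨hz₂0, hz₂y⟩, rfl⟩
        have : f z₁ + f z₂ = f (z₁ + z₂) := by rw [map_add]
        rw [this]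
        exact le_csSup (hbdd _ (add_nonneg hx hy))
          ⟨z₁ + z₂, ⟨add_nonneg hz₁0 hz₂0, add_le_add hz₁x hz₂y⟩, rfl⟩
      have h1 : p y ≤ p (x + y) - p x := by
        apply csSup_le (hne y hy)
        rintro b hb
        have h2 : p x ≤ p (x + y) - b := by
          apply csSup_le (hne x hx)
          intro a ha
          linarith [key a ha b hb]
        linarith
      linarith
  -- pass to the whole space
  set G : E → ℝ := fun x => p x⁺ - p x⁻ with hG
  have hGadd : ∀ a b : E, G (a + b) = G a + G b := by
    intro a b
    have key : (a + b)⁺ + (a⁻ + b⁻) = (a + b)⁻ + (a⁺ + b⁺) := by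
      have h1 : (a + b)⁺ = (a + b) + (a + b)⁻ :=
        eq_add_of_sub_eq (posPart_sub_negPart (a + b))
      have h2 : a⁺ = a + a⁻ := eq_add_of_sub_eq (posPart_sub_negPart a)
      have h3 : b⁺ = b + b⁻ := eq_add_of_sub_eq (posPart_sub_negPart b)
      rw [h1, h2, h3]; abel
    have e1 : p ((a + b)⁺ + (a⁻ + b⁻)) = p (a + b)⁺ + (p a⁻ + p b⁻) := by
      rw [hadd _ _ (posPart_nonneg _) (add_nonneg (negPart_nonneg _) (negPart_nonneg _)),
        hadd _ _ (negPart_nonneg _) (negPart_nonneg _)]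
    have e2 : p ((a + b)⁻ + (a⁺ + b⁺)) = p (a + b)⁻ + (p a⁺ + p b⁺) := by
      rw [hadd _ _ (negPart_nonneg _) (add_nonneg (posPart_nonneg _) (posPart_nonneg _)),
        hadd _ _ (posPart_nonneg _) (posPart_nonneg _)]
    have e3 : p (a + b)⁺ + (p a⁻ + p b⁻) = p (a + b)⁻ + (p a⁺ + p b⁺) := by
      rw [← e1, ← e2, key]
    simp only [hG]
    linarith
  have hGbound : ∀ x : E, |G x| ≤ 2 * ‖f‖ * ‖x‖ := by
    intro x
    have hpos : x⁺ ≤ |x| := sup_le (le_abs_self x) (abs_nonneg x)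
    have hneg : x⁻ ≤ |x| := sup_le (neg_le_abs x) (abs_nonneg x)
    have hnpos : ‖x⁺‖ ≤ ‖x‖ := by
      have : |x⁺| ≤ |x| := by rwa [abs_of_nonneg (posPart_nonneg x)]
      exact norm_le_norm_of_abs_le_abs this
    have hnneg : ‖x⁻‖ ≤ ‖x‖ := by
      have : |x⁻| ≤ |x| := by rwa [abs_of_nonneg (negPart_nonneg x)]
      exact norm_le_norm_of_abs_le_abs this
    have b1 : p x⁺ ≤ ‖f‖ * ‖x‖ :=
      (hp_le _ (posPart_nonneg x)).trans
        (mul_le_mul_of_nonneg_left hnpos (norm_nonneg f))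
    have b2 : p x⁻ ≤ ‖f‖ * ‖x‖ :=
      (hp_le _ (negPart_nonneg x)).trans
        (mul_le_mul_of_nonneg_left hnneg (norm_nonneg f))
    have n1 : 0 ≤ p x⁺ := hp_nonneg _ (posPart_nonneg x)
    have n2 : 0 ≤ p x⁻ := hp_nonneg _ (negPart_nonneg x)
    rw [abs_sub_le_iff]
    constructor <;> nlinarith [norm_nonneg x, norm_nonneg f]
  set Gm : E →+ ℝ := AddMonoidHom.mk' G hGadd with hGm
  have hcont : Continuous Gm := by
    have hlip : LipschitzWith (2 * ‖f‖ + 1).toNNReal Gm := by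
      apply LipschitzWith.of_dist_le_mul
      intro a b
      rw [dist_eq_norm, dist_eq_norm]
      have h1 : Gm a - Gm b = Gm (a - b) := (map_sub Gm a b).symm
      rw [h1]
      have h2 := hGbound (a - b)
      have h3 : ((2 * ‖f‖ + 1).toNNReal : ℝ) = 2 * ‖f‖ + 1 := by
        rw [Real.coe_toNNReal]
        positivity
      rw [h3]
      have h4 : ‖Gm (a - b)‖ = |G (a - b)| := Real.norm_eq_abs _
      rw [h4]
      nlinarith [norm_nonneg (a - b), abs_nonneg (G (a - b))]
    exact hlip.continuous
  refine ⟨Gm.toRealLinearMap hcont, ?_, ?_⟩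
  · intro x hx
    have h1 : (Gm.toRealLinearMap hcont) x = G x := by
      rw [AddMonoidHom.coe_toRealLinearMap]; rfl
    rw [h1]
    have h2 : x⁺ = x := posPart_eq_self.2 hx
    have h3 : x⁻ = 0 := negPart_eq_zero.2 hx
    have h4 : p 0 = 0 := by
      have : (fun y => f y) '' Set.Icc (0 : E) 0 = {0} := by
        simp [Set.Icc_self]
      simp only [hp]
      rw [this, csSup_singleton]
    simp only [hG, h2, h3, h4, sub_zero]
    exact hp_nonneg x hx
  · intro x hx
    have h1 : (Gm.toRealLinearMap hcont) x = G x := by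
      rw [AddMonoidHom.coe_toRealLinearMap]; rfl
    rw [h1]
    have h2 : x⁺ = x := posPart_eq_self.2 hx
    have h3 : x⁻ = 0 := negPart_eq_zero.2 hx
    have h4 : p 0 = 0 := by
      have : (fun y => f y) '' Set.Icc (0 : E) 0 = {0} := by
        simp [Set.Icc_self]
      simp only [hp]
      rw [this, csSup_singleton]
    simp only [hG, h2, h3, h4, sub_zero]
    exact hf_le_p x hx

end Aux

/-- a positive operator dominated by a uaw-continuous operator
is uaw-continuous. -/
theorem dominated_by_uawContinuous_is_uawContinuous
    {E F : Type*} [NormedAddCommGroup E] [Lattice E] [HasSolidNorm E] [IsOrderedAddMonoid E] [NormedSpace ℝ E] [CompleteSpace E]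
    [NormedAddCommGroup F] [Lattice F] [HasSolidNorm F] [IsOrderedAddMonoid F] [NormedSpace ℝ F] [CompleteSpace F]
    (S T : E →L[ℝ] F)
    (hS : ∀ x : E, 0 ≤ x → 0 ≤ S x)
    (hST : ∀ x : E, 0 ≤ x → S x ≤ T x)
    (hT : UawContinuous T) : UawContinuous S := by
  intro ι _ _ _ x hxb hx v hv f
  obtain ⟨C, hC⟩ := hxb
  obtain ⟨g, hgpos, hfg⟩ := exists_pos_dominating f
  have habs_bound : ∀ i, ‖|x i|‖ ≤ C := fun i => by
    rw [norm_abs_eq_norm]; exact hC i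
  have habs_uaw : UawNullNet (fun i => |x i|) := by
    intro u hu f'
    simpa [abs_abs] using hx u hu f'
  have hTy := hT ι (fun i => |x i|) ⟨C, habs_bound⟩ habs_uaw
  have key : ∀ q : F →L[ℝ] ℝ, (∀ y : F, 0 ≤ y → 0 ≤ q y) →
      Tendsto (fun i => q (|S (x i)| ⊓ v)) atTop (𝓝 0) := by
    intro q hq
    have h1 : ∀ i, (0 : ℝ) ≤ q (|S (x i)| ⊓ v) :=
      fun i => hq _ (le_inf (abs_nonneg _) hv)
    have h2 : ∀ i, q (|S (x i)| ⊓ v) ≤ q (|T (|x i|)| ⊓ v) := by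
      intro i
      have hTpos : 0 ≤ T (|x i|) :=
        le_trans (hS _ (abs_nonneg _)) (hST _ (abs_nonneg _))
      have hSabs : |S (x i)| ≤ T (|x i|) := by
        rw [abs_le']
        constructor
        · have h0 : (0 : E) ≤ |x i| - x i := sub_nonneg.2 (le_abs_self _)
          have h0' := hS _ h0
          rw [map_sub] at h0'
          have hS1 : S (x i) ≤ S (|x i|) := sub_nonneg.1 h0'
          exact hS1.trans (hST _ (abs_nonneg _))
        · have h0 : (0 : E) ≤ |x i| - -(x i) := sub_nonneg.2 (neg_le_abs (x i))
          have h0' := hS _ h0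
          rw [map_sub, map_neg] at h0'
          have hS1 : -(S (x i)) ≤ S (|x i|) := sub_nonneg.1 h0'
          exact hS1.trans (hST _ (abs_nonneg _))
      have hle : |S (x i)| ⊓ v ≤ |T (|x i|)| ⊓ v := by
        rw [abs_of_nonneg hTpos]
        exact inf_le_inf_right v hSabs
      have := hq _ (sub_nonneg.2 hle)
      rw [map_sub] at this
      linarith
    have h3 := hTy v hv q
    exact tendsto_of_tendsto_of_tendsto_of_le_of_le tendsto_const_nhds h3 h1 h2
  have hg := key g hgpos
  have hgf := key (g - f) (fun y hy => by
    simp only [ContinuousLinearMap.sub_apply]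
    linarith [hfg y hy])
  have heq : (fun i => f (|S (x i)| ⊓ v)) =
      fun i => g (|S (x i)| ⊓ v) - (g - f) (|S (x i)| ⊓ v) := by
    funext i
    simp [ContinuousLinearMap.sub_apply]
  simp only [heq]
  simpa using hg.sub hgf
end

section
/- Let E be a reflexive atomic Banach lattice with order continuous norm, let F be a Banach lattice with a strong order unit, and let T : E → F be a σ-un-continuous operator. Then T is a Dunford-Pettis operator if and only if T is a σ-unbounded Dunford-Pettis operator. -/
open Filter Topology

set_option linter.unusedSectionVars false
namespace DPAux

variable {E : Type*} [NormedAddCommGroup E] [Lattice E] [HasSolidNorm E] [IsOrderedAddMonoid E] [NormedSpace ℝ E]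

lemma sub_inf_eq_posPart (d b : E) : d - d ⊓ b = (d - b)⁺ := by
  have h : d ⊓ b + (d ⊔ b) = d + b := inf_add_sup d b
  have h2 : (d ⊔ b) - b = (d - b) ⊔ 0 := by
    rw [sub_eq_add_neg, sup_add, ← sub_eq_add_neg, ← sub_eq_add_neg, sub_self]
  have h3 : d ⊔ b = d + b - d ⊓ b := by rw [← h]; abel
  rw [posPart_def, ← h2, h3]; abel

lemma inf_add_le₃ (x b c : E) (hx : 0 ≤ x) (hb : 0 ≤ b) (hc : 0 ≤ c) :
    x ⊓ (b + c) ≤ x ⊓ b + x ⊓ c := by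
  set d := x ⊓ (b + c) with hd
  have hd0 : 0 ≤ d := le_inf hx (add_nonneg hb hc)
  have h1 : d - d ⊓ b = (d - b)⁺ := sub_inf_eq_posPart d b
  have h2 : (d - b)⁺ ≤ c := by
    rw [posPart_def]
    exact sup_le (sub_le_iff_le_add'.2 (inf_le_right : d ≤ b + c)) hc
  have h3 : d - d ⊓ b ≤ x :=
    (sub_le_self d (le_inf hd0 hb)).trans inf_le_left
  have h4 : d - d ⊓ b ≤ x ⊓ c := le_inf h3 (h1 ▸ h2)
  have h5 : d ⊓ b ≤ x ⊓ b := inf_le_inf_right _ inf_le_left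
  calc d = d ⊓ b + (d - d ⊓ b) := by abel
  _ ≤ x ⊓ b + x ⊓ c := add_le_add h5 h4

lemma nsmul_inf_eq_zero {p q : E} (hp : 0 ≤ p) (hq : 0 ≤ q) (h : p ⊓ q = 0) (n : ℕ) :
    (n • p) ⊓ q = 0 := by
  induction n with
  | zero => rw [zero_smul]; exact inf_eq_left.2 hq
  | succ n ih =>
    refine le_antisymm ?_ (le_inf (nsmul_nonneg hp _) hq)
    rw [succ_nsmul]
    calc (n • p + p) ⊓ q = q ⊓ (n • p + p) := inf_comm _ _
    _ ≤ q ⊓ (n • p) + q ⊓ p := inf_add_le₃ q (n • p) p hq (nsmul_nonneg hp n) hp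
    _ = (n • p) ⊓ q + p ⊓ q := by rw [inf_comm q, inf_comm q]
    _ ≤ 0 := by rw [ih, h]; simp

lemma nonneg_of_nsmul_nonneg {x : E} {n : ℕ} (hn : 0 < n) (h : 0 ≤ n • x) : 0 ≤ x := by
  have hd : x⁺ ⊓ x⁻ = 0 := posPart_inf_negPart_eq_zero x
  have h1 : (n • x⁻) ⊓ (n • x⁺) = 0 := by
    have ha : (n • x⁻) ⊓ x⁺ = 0 :=
      nsmul_inf_eq_zero (negPart_nonneg x) (posPart_nonneg x) (by rw [inf_comm]; exact hd) n
    have hb : (n • x⁺) ⊓ (n • x⁻) = 0 :=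
      nsmul_inf_eq_zero (posPart_nonneg x) (nsmul_nonneg (negPart_nonneg x) n)
        (by rw [inf_comm]; exact ha) n
    rw [inf_comm]; exact hb
  have h2 : n • x = n • x⁺ - n • x⁻ := by
    rw [← smul_sub, posPart_sub_negPart]
  have h3 : n • x⁻ ≤ n • x⁺ := by rw [h2, sub_nonneg] at h; exact h
  have h4 : n • x⁻ = 0 := le_antisymm (by
    have := le_inf (le_refl (n • x⁻)) h3
    rwa [h1] at this) (nsmul_nonneg (negPart_nonneg x) n)
  have h5 : x⁻ = 0 := by
    have hle : x⁻ ≤ n • x⁻ := by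
      obtain ⟨k, rfl⟩ := Nat.exists_eq_succ_of_ne_zero hn.ne'
      rw [succ_nsmul]
      exact le_add_of_nonneg_left (nsmul_nonneg (negPart_nonneg x) k)
    exact le_antisymm (h4 ▸ hle) (negPart_nonneg x)
  have := posPart_sub_negPart x
  rw [h5, sub_zero] at this
  rw [← this]; exact posPart_nonneg x

lemma ratCast_smul_nonneg {a : E} (ha : 0 ≤ a) (q : ℚ) (hq : 0 ≤ q) : 0 ≤ (q : ℝ) • a := by
  have hden : 0 < q.den := q.pos
  apply nonneg_of_nsmul_nonneg hden
  have h1 : (q.den : ℕ) • ((q : ℝ) • a) = ((q.den : ℝ) * (q : ℝ)) • a := by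
    rw [← Nat.cast_smul_eq_nsmul ℝ, smul_smul]
  have h2 : ((q.den : ℝ) * (q : ℝ)) = (q.num : ℝ) := by
    rw [mul_comm]
    rw_mod_cast [Rat.mul_den_eq_num]
  have h3 : (q.num : ℝ) • a = q.num.toNat • a := by
    rw [← Nat.cast_smul_eq_nsmul ℝ]
    congr 1
    exact_mod_cast (Int.toNat_of_nonneg (Rat.num_nonneg.2 hq)).symm
  rw [h1, h2, h3]
  exact nsmul_nonneg ha _

lemma smul_nonneg' {c : ℝ} (hc : 0 ≤ c) {a : E} (ha : 0 ≤ a) : 0 ≤ c • a := by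
  have hex : ∀ n : ℕ, ∃ q : ℚ, c < (q : ℝ) ∧ (q : ℝ) < c + 1 / (n + 1) := fun n =>
    exists_rat_btwn (lt_add_of_pos_right c (by positivity))
  choose q hq1 hq2 using hex
  have hq0 : ∀ n, 0 ≤ q n := fun n => by exact_mod_cast (hc.trans_lt (hq1 n)).le
  have hlim : Tendsto (fun n => ((q n : ℝ))) atTop (𝓝 c) := by
    have h1 : Tendsto (fun n : ℕ => c + 1 / (n + 1)) atTop (𝓝 (c + 0)) :=
      tendsto_const_nhds.add tendsto_one_div_add_atTop_nhds_zero_nat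
    rw [add_zero] at h1
    exact tendsto_of_tendsto_of_tendsto_of_le_of_le tendsto_const_nhds h1
      (fun n => (hq1 n).le) (fun n => (hq2 n).le)
  have hsmul : Tendsto (fun n => (q n : ℝ) • a) atTop (𝓝 (c • a)) := hlim.smul_const a
  exact isClosed_nonneg.mem_of_tendsto hsmul
    (Filter.Eventually.of_forall fun n => ratCast_smul_nonneg ha _ (hq0 n))


lemma smul_le_smul_left' {c : ℝ} (hc : 0 ≤ c) {a b : E} (h : a ≤ b) : c • a ≤ c • b := by
  have := smul_nonneg' hc (sub_nonneg.2 h)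
  rw [smul_sub] at this
  exact sub_nonneg.1 this

lemma smul_le_smul_right' {s t : ℝ} (h : s ≤ t) {a : E} (ha : 0 ≤ a) : s • a ≤ t • a := by
  have := smul_nonneg' (sub_nonneg.2 h) ha
  rw [sub_smul] at this
  exact sub_nonneg.1 this

lemma le_of_smul_le_smul {c : ℝ} (hc : 0 < c) {a b : E} (h : c • a ≤ c • b) : a ≤ b := by
  have := smul_le_smul_left' (inv_nonneg.2 hc.le) h
  rwa [inv_smul_smul₀ hc.ne', inv_smul_smul₀ hc.ne'] at this

lemma scalar_le_of_smul_le {s t : ℝ} {a : E} (ha : 0 < a) (h : s • a ≤ t • a) : s ≤ t := by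
  by_contra hlt
  push_neg at hlt
  have h1 : (s - t) • a ≤ 0 := by rw [sub_smul, sub_nonpos]; exact h
  have h2 : a ≤ 0 := by
    have h3 := smul_le_smul_left' (inv_nonneg.2 (sub_pos.2 hlt).le) h1
    rwa [smul_zero, inv_smul_smul₀ (sub_pos.2 hlt).ne'] at h3
  exact absurd (ha.trans_le h2) (lt_irrefl 0)

lemma smul_sup' {c : ℝ} (hc : 0 ≤ c) (a b : E) : c • (a ⊔ b) = (c • a) ⊔ (c • b) := by
  rcases eq_or_lt_of_le hc with rfl | hc
  · simp
  · apply le_antisymm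
    · have h1 : a ≤ c⁻¹ • ((c • a) ⊔ (c • b)) := by
        have := smul_le_smul_left' (inv_nonneg.2 hc.le) (le_sup_left : c • a ≤ (c • a) ⊔ (c • b))
        rwa [inv_smul_smul₀ hc.ne'] at this
      have h2 : b ≤ c⁻¹ • ((c • a) ⊔ (c • b)) := by
        have := smul_le_smul_left' (inv_nonneg.2 hc.le) (le_sup_right : c • b ≤ (c • a) ⊔ (c • b))
        rwa [inv_smul_smul₀ hc.ne'] at this
      have := smul_le_smul_left' hc.le (sup_le h1 h2)
      rwa [smul_inv_smul₀ hc.ne'] at this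
    · exact sup_le (smul_le_smul_left' hc.le le_sup_left) (smul_le_smul_left' hc.le le_sup_right)

lemma posPart_smul' {c : ℝ} (hc : 0 ≤ c) (x : E) : (c • x)⁺ = c • x⁺ := by
  rw [posPart_def, posPart_def, smul_sup' hc, smul_zero]

lemma negPart_smul' {c : ℝ} (hc : 0 ≤ c) (x : E) : (c • x)⁻ = c • x⁻ := by
  rw [negPart_def, negPart_def, smul_sup' hc, smul_zero, smul_neg]

lemma abs_smul' {c : ℝ} (hc : 0 ≤ c) (x : E) : |c • x| = c • |x| := by
  rw [← posPart_add_negPart (c • x), posPart_smul' hc, negPart_smul' hc, ← smul_add,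
    posPart_add_negPart]

lemma norm_le_of_le {x z : E} (hx : 0 ≤ x) (hz : x ≤ z) : ‖x‖ ≤ ‖z‖ :=
  HasSolidNorm.solid (by rwa [abs_of_nonneg hx, abs_of_nonneg (hx.trans hz)])

lemma nonneg_of_dual (x : E) (h : ∀ f : E →L[ℝ] ℝ, (∀ z : E, 0 ≤ z → 0 ≤ f z) → 0 ≤ f x) :
    0 ≤ x := by
  by_contra hx
  have hconv : Convex ℝ {z : E | 0 ≤ z} := fun u hu v hv s t hs ht _ =>
    add_nonneg (smul_nonneg' hs hu) (smul_nonneg' ht hv)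
  obtain ⟨f, u, hfx, hfb⟩ := geometric_hahn_banach_point_closed hconv isClosed_nonneg hx
  have hu0 : u < 0 := by
    have h0 := hfb 0 (le_refl (0 : E))
    rwa [map_zero] at h0
  have hfpos : ∀ z : E, 0 ≤ z → 0 ≤ f z := by
    intro z hz
    by_contra hfz
    push_neg at hfz
    have ht : 0 < (u - 1) / f z :=
      div_pos_of_neg_of_neg (sub_neg.mpr (hu0.trans zero_lt_one)) hfz
    have h2 := hfb (((u - 1) / f z) • z) (smul_nonneg' ht.le hz)
    rw [map_smul, smul_eq_mul, div_mul_cancel₀ _ (ne_of_lt hfz)] at h2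
    exact absurd h2 (not_lt.2 (by norm_num))
  exact absurd (h f hfpos) (not_le.2 (lt_trans hfx hu0))


section Comp

variable {E : Type*} [NormedAddCommGroup E] [Lattice E] [HasSolidNorm E] [IsOrderedAddMonoid E] [NormedSpace ℝ E]

/-- The set of scalars `t ≥ 0` with `t • a ≤ y`. -/
def compSet (a y : E) : Set ℝ := {t : ℝ | 0 ≤ t ∧ t • a ≤ y}

noncomputable def comp (a y : E) : ℝ := sSup (compSet a y)

lemma compSet_zero_mem {a y : E} (hy : 0 ≤ y) : (0 : ℝ) ∈ compSet a y :=
  ⟨le_rfl, by rw [zero_smul]; exact hy⟩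

lemma compSet_le {a y : E} (ha : 0 < a) (hy : 0 ≤ y) {t : ℝ} (ht : t ∈ compSet a y) :
    t ≤ ‖y‖ / ‖a‖ := by
  obtain ⟨ht0, hta⟩ := ht
  have hna : 0 < ‖a‖ := norm_pos_iff.2 ha.ne'
  have h1 : ‖t • a‖ ≤ ‖y‖ := norm_le_of_le (smul_nonneg' ht0 ha.le) hta
  rw [norm_smul, Real.norm_eq_abs, abs_of_nonneg ht0] at h1
  exact (le_div_iff₀ hna).2 h1

lemma compSet_bddAbove {a y : E} (ha : 0 < a) (hy : 0 ≤ y) : BddAbove (compSet a y) :=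
  ⟨‖y‖ / ‖a‖, fun _ ht => compSet_le ha hy ht⟩

lemma compSet_closed (a y : E) : IsClosed (compSet a y) := by
  have : compSet a y = {t : ℝ | 0 ≤ t} ∩ {t : ℝ | t • a ≤ y} := rfl
  rw [this]
  exact IsClosed.inter (isClosed_le continuous_const continuous_id)
    (IsClosed.preimage (continuous_id.smul continuous_const) isClosed_Iic)

lemma comp_mem {a y : E} (ha : 0 < a) (hy : 0 ≤ y) : comp a y ∈ compSet a y :=
  (compSet_closed a y).csSup_mem ⟨0, compSet_zero_mem hy⟩ (compSet_bddAbove ha hy)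

lemma comp_nonneg {a y : E} (ha : 0 < a) (hy : 0 ≤ y) : 0 ≤ comp a y :=
  (comp_mem ha hy).1

lemma comp_smul_le {a y : E} (ha : 0 < a) (hy : 0 ≤ y) : comp a y • a ≤ y :=
  (comp_mem ha hy).2

lemma le_comp {a y : E} (ha : 0 < a) (hy : 0 ≤ y) {t : ℝ} (ht0 : 0 ≤ t) (h : t • a ≤ y) :
    t ≤ comp a y :=
  le_csSup (compSet_bddAbove ha hy) ⟨ht0, h⟩

lemma comp_le_norm {a y : E} (ha : 0 < a) (hy : 0 ≤ y) : comp a y ≤ ‖y‖ / ‖a‖ :=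
  compSet_le ha hy (comp_mem ha hy)

lemma comp_mono {a y₁ y₂ : E} (ha : 0 < a) (hy1 : 0 ≤ y₁) (h : y₁ ≤ y₂) :
    comp a y₁ ≤ comp a y₂ :=
  csSup_le_csSup (compSet_bddAbove ha (hy1.trans h)) ⟨0, compSet_zero_mem hy1⟩
    (fun _ ht => ⟨ht.1, ht.2.trans h⟩)

lemma atom_le_smul {a : E} (hA : IsLatticeAtom a) {c : ℝ} (hc : 0 ≤ c) {x : E}
    (hx0 : 0 ≤ x) (hx : x ≤ c • a) : ∃ s, 0 ≤ s ∧ s ≤ c ∧ x = s • a := by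
  rcases eq_or_lt_of_le hc with rfl | hc
  · refine ⟨0, le_rfl, le_rfl, ?_⟩
    rw [zero_smul] at hx ⊢
    exact le_antisymm hx hx0
  · have h1 : c⁻¹ • x ≤ a := by
      have := smul_le_smul_left' (inv_nonneg.2 hc.le) hx
      rwa [inv_smul_smul₀ hc.ne'] at this
    obtain ⟨s', hs'⟩ := hA.2 _ (smul_nonneg' (inv_nonneg.2 hc.le) hx0) h1
    rcases le_or_gt 0 s' with hs0 | hs0
    · have hs1 : s' ≤ 1 := by
        apply scalar_le_of_smul_le hA.1
        rw [one_smul, ← hs']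
        exact h1
      refine ⟨c * s', mul_nonneg hc.le hs0, ?_, ?_⟩
      · calc c * s' ≤ c * 1 := by nlinarith
        _ = c := mul_one c
      · rw [mul_smul, ← hs', smul_inv_smul₀ hc.ne']
    · have hle : s' • a ≤ 0 := by
        have := smul_le_smul_right' hs0.le hA.1.le
        rwa [zero_smul] at this
      have hx0' : c⁻¹ • x = 0 :=
        le_antisymm (hs' ▸ hle) (smul_nonneg' (inv_nonneg.2 hc.le) hx0)
      have hx' : x = 0 := by
        have := congrArg (fun z => c • z) hx0'
        simpa [smul_inv_smul₀ hc.ne'] using this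
      exact ⟨0, le_rfl, hc.le, by simp [hx']⟩

lemma comp_inf_smul {a : E} (hA : IsLatticeAtom a) {y : E} (hy : 0 ≤ y) {c : ℝ} (hc : 0 ≤ c) :
    y ⊓ c • a ≤ comp a y • a := by
  have hz0 : 0 ≤ y ⊓ c • a := le_inf hy (smul_nonneg' hc hA.1.le)
  obtain ⟨s, hs0, _, hz⟩ := atom_le_smul hA hc hz0 inf_le_right
  have hs : s ≤ comp a y := le_comp hA.1 hy hs0 (hz ▸ (inf_le_left : y ⊓ c • a ≤ y))
  rw [hz]
  exact smul_le_smul_right' hs hA.1.le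

lemma comp_add {a : E} (hA : IsLatticeAtom a) {x y : E} (hx : 0 ≤ x) (hy : 0 ≤ y) :
    comp a (x + y) = comp a x + comp a y := by
  have hxy : 0 ≤ x + y := add_nonneg hx hy
  apply le_antisymm
  · set T := comp a (x + y) with hT
    have hT0 : 0 ≤ T := comp_nonneg hA.1 hxy
    have hTle : T • a ≤ x + y := comp_smul_le hA.1 hxy
    have hp0 : 0 ≤ (T • a) ⊓ x := le_inf (smul_nonneg' hT0 hA.1.le) hx
    obtain ⟨s, hs0, hsT, hp⟩ := atom_le_smul hA hT0 hp0 inf_le_left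
    have h1 : s ≤ comp a x := le_comp hA.1 hx hs0 (hp ▸ (inf_le_right : (T • a) ⊓ x ≤ x))
    have hq : T • a - (T • a) ⊓ x = (T • a - x)⁺ := sub_inf_eq_posPart _ _
    have hq2 : (T • a - x)⁺ ≤ y := by
      rw [posPart_def]
      exact sup_le (sub_le_iff_le_add'.2 hTle) hy
    have hq3 : T • a - (T • a) ⊓ x = (T - s) • a := by rw [hp, ← sub_smul]
    have h2 : T - s ≤ comp a y := by
      apply le_comp hA.1 hy (by linarith)
      rw [← hq3, hq]
      exact hq2
    linarith
  · have h1 : (comp a x + comp a y) • a ≤ x + y := by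
      rw [add_smul]
      exact add_le_add (comp_smul_le hA.1 hx) (comp_smul_le hA.1 hy)
    exact le_comp hA.1 hxy (add_nonneg (comp_nonneg hA.1 hx) (comp_nonneg hA.1 hy)) h1

lemma comp_part_eq_zero {a : E} (hA : IsLatticeAtom a) (x : E) :
    comp a x⁺ = 0 ∨ comp a x⁻ = 0 := by
  by_contra h
  push_neg at h
  have h1 : 0 < comp a x⁺ := lt_of_le_of_ne (comp_nonneg hA.1 (posPart_nonneg x)) (Ne.symm h.1)
  have h2 : 0 < comp a x⁻ := lt_of_le_of_ne (comp_nonneg hA.1 (negPart_nonneg x)) (Ne.symm h.2)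
  set m := min (comp a x⁺) (comp a x⁻) with hm
  have hm0 : 0 < m := lt_min h1 h2
  have hma : m • a ≤ x⁺ ⊓ x⁻ := by
    apply le_inf
    · exact (smul_le_smul_right' (min_le_left _ _) hA.1.le).trans (comp_smul_le hA.1 (posPart_nonneg x))
    · exact (smul_le_smul_right' (min_le_right _ _) hA.1.le).trans (comp_smul_le hA.1 (negPart_nonneg x))
  rw [posPart_inf_negPart_eq_zero] at hma
  have : a ≤ 0 := by
    have := smul_le_smul_left' (inv_nonneg.2 hm0.le) hma
    rwa [smul_zero, inv_smul_smul₀ hm0.ne'] at this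
  exact absurd (hA.1.trans_le this) (lt_irrefl 0)

lemma comp_zero {a : E} (hA : IsLatticeAtom a) : comp a 0 = 0 := by
  obtain ⟨h0, hle⟩ := comp_mem hA.1 (le_refl (0 : E))
  rcases eq_or_lt_of_le h0 with h | h
  · exact h.symm
  · exfalso
    have : a ≤ 0 := by
      have h2 := smul_le_smul_left' (inv_nonneg.2 h.le) hle
      rwa [smul_zero, inv_smul_smul₀ h.ne'] at h2
    exact absurd (hA.1.trans_le this) (lt_irrefl 0)

lemma comp_smul {a : E} (hA : IsLatticeAtom a) {c : ℝ} (hc : 0 ≤ c) {y : E} (hy : 0 ≤ y) :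
    comp a (c • y) = c * comp a y := by
  rcases eq_or_lt_of_le hc with rfl | hc
  · rw [zero_smul, zero_mul, comp_zero hA]
  · apply le_antisymm
    · have hm := comp_smul_le hA.1 (smul_nonneg' hc.le hy)
      have h1 : (c⁻¹ * comp a (c • y)) • a ≤ y := by
        rw [mul_smul]
        have := smul_le_smul_left' (inv_nonneg.2 hc.le) hm
        rwa [inv_smul_smul₀ hc.ne'] at this
      have h2 : c⁻¹ * comp a (c • y) ≤ comp a y :=
        le_comp hA.1 hy (mul_nonneg (inv_nonneg.2 hc.le) (comp_nonneg hA.1 (smul_nonneg' hc.le hy))) h1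
      calc comp a (c • y) = c * (c⁻¹ * comp a (c • y)) := by field_simp
      _ ≤ c * comp a y := by nlinarith
    · have h1 : (c * comp a y) • a ≤ c • y := by
        rw [mul_smul]
        exact smul_le_smul_left' hc.le (comp_smul_le hA.1 hy)
      exact le_comp hA.1 (smul_nonneg' hc.le hy) (mul_nonneg hc.le (comp_nonneg hA.1 hy)) h1

end Comp

section AtomDual

variable {E : Type*} [NormedAddCommGroup E] [Lattice E] [HasSolidNorm E] [IsOrderedAddMonoid E] [NormedSpace ℝ E]

noncomputable def atomFn (a : E) (x : E) : ℝ := comp a x⁺ - comp a x⁻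

lemma atomFn_add {a : E} (hA : IsLatticeAtom a) (x y : E) :
    atomFn a (x + y) = atomFn a x + atomFn a y := by
  have key : (x + y)⁺ + (x⁻ + y⁻) = (x + y)⁻ + (x⁺ + y⁺) := by
    have e1 : (x + y)⁺ = (x + y) + (x + y)⁻ := sub_eq_iff_eq_add.mp (posPart_sub_negPart (x + y))
    have e2 : x⁺ = x + x⁻ := sub_eq_iff_eq_add.mp (posPart_sub_negPart x)
    have e3 : y⁺ = y + y⁻ := sub_eq_iff_eq_add.mp (posPart_sub_negPart y)
    rw [e1, e2, e3]; abel
  have c1 : comp a ((x + y)⁺ + (x⁻ + y⁻)) =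
      comp a (x + y)⁺ + (comp a x⁻ + comp a y⁻) := by
    rw [comp_add hA (posPart_nonneg _) (add_nonneg (negPart_nonneg x) (negPart_nonneg y)),
      comp_add hA (negPart_nonneg x) (negPart_nonneg y)]
  have c2 : comp a ((x + y)⁻ + (x⁺ + y⁺)) =
      comp a (x + y)⁻ + (comp a x⁺ + comp a y⁺) := by
    rw [comp_add hA (negPart_nonneg _) (add_nonneg (posPart_nonneg x) (posPart_nonneg y)),
      comp_add hA (posPart_nonneg x) (posPart_nonneg y)]
  rw [key] at c1
  rw [c2] at c1
  unfold atomFn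
  linarith

lemma atomFn_neg {a : E} (x : E) : atomFn a (-x) = - atomFn a x := by
  unfold atomFn
  have h1 : (-x)⁺ = x⁻ := by rw [posPart_def, negPart_def]
  have h2 : (-x)⁻ = x⁺ := by rw [posPart_def, negPart_def, neg_neg]
  rw [h1, h2]; ring

lemma atomFn_smul {a : E} (hA : IsLatticeAtom a) (c : ℝ) (x : E) :
    atomFn a (c • x) = c * atomFn a x := by
  rcases le_or_gt 0 c with hc | hc
  · unfold atomFn
    rw [posPart_smul' hc, negPart_smul' hc, comp_smul hA hc (posPart_nonneg x),
      comp_smul hA hc (negPart_nonneg x)]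
    ring
  · have h1 : c • x = (-c) • (-x) := by rw [neg_smul_neg]
    rw [h1]
    rw [show atomFn a ((-c) • (-x)) = (-c) * atomFn a (-x) from ?_, atomFn_neg]
    · ring
    · unfold atomFn
      rw [posPart_smul' (by linarith : (0:ℝ) ≤ -c), negPart_smul' (by linarith : (0:ℝ) ≤ -c),
        comp_smul hA (by linarith) (posPart_nonneg (-x)),
        comp_smul hA (by linarith) (negPart_nonneg (-x))]
      ring

lemma norm_posPart_le' (x : E) : ‖x⁺‖ ≤ ‖x‖ := by
  apply HasSolidNorm.solid
  rw [abs_of_nonneg (posPart_nonneg x)]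
  rw [posPart_def]
  exact sup_le (le_abs_self x) (abs_nonneg x)

lemma norm_negPart_le' (x : E) : ‖x⁻‖ ≤ ‖x‖ := by
  apply HasSolidNorm.solid
  rw [abs_of_nonneg (negPart_nonneg x)]
  rw [negPart_def]
  exact sup_le (neg_le_abs x) (abs_nonneg x)

lemma atomFn_bound {a : E} (hA : IsLatticeAtom a) (x : E) :
    ‖atomFn a x‖ ≤ 2 / ‖a‖ * ‖x‖ := by
  have hna : 0 < ‖a‖ := norm_pos_iff.2 hA.1.ne'
  have key1 : comp a x⁺ ≤ ‖x‖ / ‖a‖ :=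
    (comp_le_norm hA.1 (posPart_nonneg x)).trans (by gcongr; exact norm_posPart_le' x)
  have key2 : comp a x⁻ ≤ ‖x‖ / ‖a‖ :=
    (comp_le_norm hA.1 (negPart_nonneg x)).trans (by gcongr; exact norm_negPart_le' x)
  have h0p := comp_nonneg hA.1 (posPart_nonneg x)
  have h0n := comp_nonneg hA.1 (negPart_nonneg x)
  have hr : 2 / ‖a‖ * ‖x‖ = ‖x‖ / ‖a‖ + ‖x‖ / ‖a‖ := by ring
  unfold atomFn
  rw [Real.norm_eq_abs, abs_le]
  constructor <;> linarith

noncomputable def atomDual {a : E} (hA : IsLatticeAtom a) : E →L[ℝ] ℝ :=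
  LinearMap.mkContinuous
    { toFun := atomFn a
      map_add' := atomFn_add hA
      map_smul' := fun c x => by simpa using atomFn_smul hA c x }
    (2 / ‖a‖) (fun x => atomFn_bound hA x)

lemma atomDual_apply {a : E} (hA : IsLatticeAtom a) (x : E) : atomDual hA x = atomFn a x := rfl

end AtomDual

section KB

variable {E : Type*} [NormedAddCommGroup E] [Lattice E] [HasSolidNorm E] [IsOrderedAddMonoid E] [NormedSpace ℝ E]

noncomputable def gfun (f : E →L[ℝ] ℝ) (x : E) : ℝ :=
  sSup ((fun y => f y) '' {y : E | 0 ≤ y ∧ y ≤ x})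

lemma gfun_bddAbove (f : E →L[ℝ] ℝ) {x : E} (hx : 0 ≤ x) :
    BddAbove ((fun y => f y) '' {y : E | 0 ≤ y ∧ y ≤ x}) := by
  refine ⟨‖f‖ * ‖x‖, ?_⟩
  rintro r ⟨y, ⟨hy0, hyx⟩, rfl⟩
  calc f y ≤ ‖f y‖ := le_abs_self _
  _ ≤ ‖f‖ * ‖y‖ := f.le_opNorm y
  _ ≤ ‖f‖ * ‖x‖ := by
      have := norm_le_of_le hy0 hyx
      exact mul_le_mul_of_nonneg_left this (norm_nonneg f)

lemma gfun_nonempty (f : E →L[ℝ] ℝ) {x : E} (hx : 0 ≤ x) :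
    ((fun y => f y) '' {y : E | 0 ≤ y ∧ y ≤ x}).Nonempty :=
  ⟨f 0, ⟨0, ⟨le_rfl, hx⟩, rfl⟩⟩

lemma le_gfun (f : E →L[ℝ] ℝ) {x y : E} (hy0 : 0 ≤ y) (hyx : y ≤ x) : f y ≤ gfun f x :=
  le_csSup (gfun_bddAbove f (hy0.trans hyx)) ⟨y, ⟨hy0, hyx⟩, rfl⟩

lemma gfun_le (f : E →L[ℝ] ℝ) {x : E} (hx : 0 ≤ x) {c : ℝ}
    (h : ∀ y : E, 0 ≤ y → y ≤ x → f y ≤ c) : gfun f x ≤ c := by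
  apply csSup_le (gfun_nonempty f hx)
  rintro r ⟨y, ⟨hy0, hyx⟩, rfl⟩
  exact h y hy0 hyx

lemma gfun_nonneg (f : E →L[ℝ] ℝ) {x : E} (hx : 0 ≤ x) : 0 ≤ gfun f x := by
  have := le_gfun f (le_refl (0 : E)) hx
  rwa [map_zero] at this

lemma gfun_add (f : E →L[ℝ] ℝ) {x y : E} (hx : 0 ≤ x) (hy : 0 ≤ y) :
    gfun f (x + y) = gfun f x + gfun f y := by
  apply le_antisymm
  · apply gfun_le f (add_nonneg hx hy)
    intro w hw0 hwxy
    have hw1 : (0 : E) ≤ w ⊓ x := le_inf hw0 hx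
    have hw2 : w - w ⊓ x = (w - x)⁺ := sub_inf_eq_posPart w x
    have hw20 : 0 ≤ w - w ⊓ x := by rw [hw2]; exact posPart_nonneg _
    have hw2y : w - w ⊓ x ≤ y := by
      rw [hw2, posPart_def]
      exact sup_le (sub_le_iff_le_add'.2 hwxy) hy
    have : f w = f (w ⊓ x) + f (w - w ⊓ x) := by rw [← map_add]; congr 1; abel
    rw [this]
    exact add_le_add (le_gfun f hw1 inf_le_right) (le_gfun f hw20 hw2y)
  · have h1 : gfun f x ≤ gfun f (x + y) - gfun f y := by
      apply gfun_le f hx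
      intro w hw0 hwx
      have h2 : gfun f y ≤ gfun f (x + y) - f w := by
        apply gfun_le f hy
        intro v hv0 hvy
        have h3 : f (w + v) ≤ gfun f (x + y) :=
          le_gfun f (add_nonneg hw0 hv0) (add_le_add hwx hvy)
        rw [map_add] at h3
        linarith
      linarith
    linarith

lemma exists_lim {u : E} (f : E →L[ℝ] ℝ) (s : ℕ → E) (hmono : Monotone s)
    (h0 : ∀ n, 0 ≤ s n) (hub : ∀ n, s n ≤ u) :
    ∃ l, Tendsto (fun n => f (s n)) atTop (𝓝 l) := by
  have hgd : ∀ {n m : ℕ}, n ≤ m → gfun f (s m) = gfun f (s n) + gfun f (s m - s n) := by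
    intro n m hnm
    have hd : s n + (s m - s n) = s m := by abel
    have := gfun_add f (h0 n) (sub_nonneg.2 (hmono hnm))
    rw [hd] at this
    exact this
  have hAmono : Monotone fun n => gfun f (s n) := fun n m hnm => by
    show gfun f (s n) ≤ gfun f (s m)
    rw [hgd hnm]
    have := gfun_nonneg f (sub_nonneg.2 (hmono hnm))
    linarith
  have hnorm : ∀ n, ‖s n‖ ≤ ‖u‖ := fun n => norm_le_of_le (h0 n) (hub n)
  have hAbdd : ∀ n, gfun f (s n) ≤ ‖f‖ * ‖u‖ := fun n => by
    apply gfun_le f (h0 n)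
    intro y hy0 hyx
    calc f y ≤ ‖f y‖ := le_abs_self _
    _ ≤ ‖f‖ * ‖y‖ := f.le_opNorm y
    _ ≤ ‖f‖ * ‖u‖ := mul_le_mul_of_nonneg_left
        ((norm_le_of_le hy0 hyx).trans (hnorm n)) (norm_nonneg f)
  have hBmono : Monotone fun n => gfun f (s n) - f (s n) := fun n m hnm => by
    have h1 : f (s m - s n) ≤ gfun f (s m - s n) :=
      le_gfun f (sub_nonneg.2 (hmono hnm)) le_rfl
    have h2 := hgd hnm
    have h3 : f (s m - s n) = f (s m) - f (s n) := map_sub f _ _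
    simp only []
    linarith
  have hBbdd : ∀ n, gfun f (s n) - f (s n) ≤ ‖f‖ * ‖u‖ + ‖f‖ * ‖u‖ := fun n => by
    have h1 : - f (s n) ≤ ‖f‖ * ‖u‖ := by
      have := (f.le_opNorm (s n)).trans (mul_le_mul_of_nonneg_left (hnorm n) (norm_nonneg f))
      have h2 := neg_abs_le (f (s n))
      rw [Real.norm_eq_abs] at this
      linarith
    linarith [hAbdd n]
  have hA := tendsto_atTop_ciSup hAmono ⟨‖f‖ * ‖u‖, by rintro r ⟨n, rfl⟩; exact hAbdd n⟩
  have hB := tendsto_atTop_ciSup hBmono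
    ⟨‖f‖ * ‖u‖ + ‖f‖ * ‖u‖, by rintro r ⟨n, rfl⟩; exact hBbdd n⟩
  refine ⟨(⨆ n, gfun f (s n)) - ⨆ n, (gfun f (s n) - f (s n)), ?_⟩
  have : (fun n => f (s n)) = fun n => gfun f (s n) - (gfun f (s n) - f (s n)) := by
    funext n; ring
  rw [this]
  exact hA.sub hB

lemma kb (hrefl : Function.Surjective (NormedSpace.inclusionInDoubleDual ℝ E))
    (hocn : OrderContinuousNorm E) (u : E) (s : ℕ → E) (hmono : Monotone s)
    (h0 : ∀ n, 0 ≤ s n) (hub : ∀ n, s n ≤ u) :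
    ∃ w : E, Tendsto (fun n => ‖w - s n‖) atTop (𝓝 0) := by
  have hlim : ∀ f : E →L[ℝ] ℝ, ∃ l, Tendsto (fun n => f (s n)) atTop (𝓝 l) := fun f =>
    exists_lim f s hmono h0 hub
  choose lim hlimspec using hlim
  have hnorm : ∀ n, ‖s n‖ ≤ ‖u‖ := fun n => norm_le_of_le (h0 n) (hub n)
  have hbound : ∀ f : E →L[ℝ] ℝ, ‖lim f‖ ≤ ‖u‖ * ‖f‖ := fun f => by
    rw [Real.norm_eq_abs]
    have habs : Tendsto (fun n => |f (s n)|) atTop (𝓝 |lim f|) := (hlimspec f).abs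
    apply le_of_tendsto habs
    apply Filter.Eventually.of_forall
    intro n
    have := (f.le_opNorm (s n)).trans (mul_le_mul_of_nonneg_left (hnorm n) (norm_nonneg f))
    rw [Real.norm_eq_abs] at this
    linarith [this]
  set L : StrongDual ℝ (StrongDual ℝ E) := LinearMap.mkContinuous
    { toFun := lim
      map_add' := fun f g => tendsto_nhds_unique (hlimspec (f + g))
        (by simpa using (hlimspec f).add (hlimspec g))
      map_smul' := fun c f => tendsto_nhds_unique (hlimspec (c • f))
        (by simpa [smul_eq_mul] using (hlimspec f).const_mul c) }
    ‖u‖ hbound with hL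
  obtain ⟨w, hw⟩ := hrefl L
  have hfw : ∀ f : E →L[ℝ] ℝ, Tendsto (fun n => f (s n)) atTop (𝓝 (f w)) := fun f => by
    have h1 : f w = L f := by rw [← hw]; rfl
    have h2 : L f = lim f := rfl
    rw [h1, h2]
    exact hlimspec f
  have hge : ∀ n, s n ≤ w := fun n => by
    rw [← sub_nonneg]
    apply nonneg_of_dual
    intro f hf
    have h2 : ∀ m, m ≥ n → f (s n) ≤ f (s m) := fun m hm => by
      have := hf _ (sub_nonneg.2 (hmono hm))
      rw [map_sub] at this
      linarith
    have h3 : f (s n) ≤ f w := ge_of_tendsto (hfw f) (eventually_atTop.2 ⟨n, h2⟩)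
    rw [map_sub]
    linarith
  have hglb : IsGLB (Set.range fun n => w - s n) 0 := by
    constructor
    · rintro z ⟨n, rfl⟩
      exact sub_nonneg.2 (hge n)
    · intro b hb
      have hnb : 0 ≤ -b := by
        apply nonneg_of_dual
        intro f hf
        have h1 : ∀ n : ℕ, f b ≤ f w - f (s n) := fun n => by
          have hble : b ≤ w - s n := hb ⟨n, rfl⟩
          have := hf _ (sub_nonneg.2 hble)
          rw [map_sub, map_sub] at this
          linarith
        have h2 : Tendsto (fun n => f w - f (s n)) atTop (𝓝 0) := by
          have h2' := (tendsto_const_nhds (x := f w) (f := atTop (α := ℕ))).sub (hfw f)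
          simpa using h2'
        have h3 : f b ≤ 0 := ge_of_tendsto h2 (Filter.Eventually.of_forall h1)
        rw [map_neg]
        linarith
      exact neg_nonneg.1 hnb
  refine ⟨w, hocn ℕ (fun n => w - s n) (fun n m h => sub_le_sub_left (hmono h) w) hglb⟩

end KB

section Greedy

variable {E : Type*} [NormedAddCommGroup E] [Lattice E] [HasSolidNorm E] [IsOrderedAddMonoid E] [NormedSpace ℝ E]

def sigmaSet (r : E) : Set ℝ :=
  {s : ℝ | s = 0 ∨ ∃ (a : E) (t : ℝ), IsLatticeAtom a ∧ 0 ≤ t ∧ t • a ≤ r ∧ s = t * ‖a‖}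

noncomputable def sigmaA (r : E) : ℝ := sSup (sigmaSet r)

lemma sigmaSet_bddAbove {r : E} (hr : 0 ≤ r) : BddAbove (sigmaSet r) := by
  refine ⟨‖r‖, ?_⟩
  rintro s (rfl | ⟨a, t, hA, ht, hta, rfl⟩)
  · exact norm_nonneg r
  · have h1 : ‖t • a‖ ≤ ‖r‖ := norm_le_of_le (smul_nonneg' ht hA.1.le) hta
    rwa [norm_smul, Real.norm_eq_abs, abs_of_nonneg ht] at h1

lemma sigmaA_nonneg {r : E} (hr : 0 ≤ r) : 0 ≤ sigmaA r :=
  le_csSup (sigmaSet_bddAbove hr) (Or.inl rfl)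

lemma norm_atom_le_sigmaA {r a : E} (hr : 0 ≤ r) (hA : IsLatticeAtom a) (h : a ≤ r) :
    ‖a‖ ≤ sigmaA r :=
  le_csSup (sigmaSet_bddAbove hr) (Or.inr ⟨a, 1, hA, zero_le_one, by simpa using h, by simp⟩)

lemma exists_step (r : E) (hr : 0 ≤ r) : ∃ c : E, 0 ≤ c ∧ c ≤ r ∧ sigmaA r ≤ 2 * ‖c‖ ∧
    (c = 0 ∨ ∃ (a : E) (t : ℝ), IsLatticeAtom a ∧ 0 ≤ t ∧ c = t • a) := by
  rcases le_or_gt (sigmaA r) 0 with h | h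
  · exact ⟨0, le_rfl, hr, by simp only [norm_zero, mul_zero]; exact h, Or.inl rfl⟩
  · obtain ⟨s, hs, hs2⟩ := exists_lt_of_lt_csSup (⟨0, Or.inl rfl⟩ : (sigmaSet r).Nonempty)
      (by unfold sigmaA at h ⊢; linarith : sigmaA r / 2 < sSup (sigmaSet r))
    rcases hs with rfl | ⟨a, t, hA, ht, hta, rfl⟩
    · linarith
    · refine ⟨t • a, smul_nonneg' ht hA.1.le, hta, ?_, Or.inr ⟨a, t, hA, ht, rfl⟩⟩
      rw [norm_smul, Real.norm_eq_abs, abs_of_nonneg ht]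
      linarith

open Classical in
noncomputable def cfun (r : E) : E :=
  if hr : 0 ≤ r then Classical.choose (exists_step r hr) else 0

lemma cfun_spec {r : E} (hr : 0 ≤ r) : 0 ≤ cfun r ∧ cfun r ≤ r ∧ sigmaA r ≤ 2 * ‖cfun r‖ ∧
    (cfun r = 0 ∨ ∃ (a : E) (t : ℝ), IsLatticeAtom a ∧ 0 ≤ t ∧ cfun r = t • a) := by
  unfold cfun
  rw [dif_pos hr]
  exact Classical.choose_spec (exists_step r hr)

noncomputable def resid (u : E) : ℕ → E
  | 0 => u
  | (m + 1) => resid u m - cfun (resid u m)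

lemma resid_nonneg {u : E} (hu : 0 ≤ u) : ∀ m, 0 ≤ resid u m
  | 0 => hu
  | (m + 1) => sub_nonneg.2 (cfun_spec (resid_nonneg hu m)).2.1

lemma resid_antitone {u : E} (hu : 0 ≤ u) : Antitone (resid u) :=
  antitone_nat_of_succ_le fun m => sub_le_self _ (cfun_spec (resid_nonneg hu m)).1

lemma resid_sum {u : E} : ∀ m, u - resid u m = ∑ i ∈ Finset.range m, cfun (resid u i)
  | 0 => by simp [resid]
  | (m + 1) => by
    rw [Finset.sum_range_succ, ← resid_sum m]
    show u - (resid u m - cfun (resid u m)) = _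
    abel

lemma approx (hrefl : Function.Surjective (NormedSpace.inclusionInDoubleDual ℝ E))
    (hocn : OrderContinuousNorm E) (hatomic : IsAtomicLattice E) (u : E) (hu : 0 ≤ u) :
    Tendsto (fun m => ‖resid u m‖) atTop (𝓝 0) := by
  set c : ℕ → E := fun m => cfun (resid u m) with hc
  have hc0 : ∀ m, 0 ≤ c m := fun m => (cfun_spec (resid_nonneg hu m)).1
  have hres : ∀ m, resid u (m + 1) = resid u m - c m := fun m => rfl
  have hrle : ∀ m, resid u m ≤ u := fun m => resid_antitone hu (Nat.zero_le m)
  have hmono : Monotone fun m => u - resid u m := fun n m hnm =>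
    sub_le_sub_left (resid_antitone hu hnm) u
  have hs0 : ∀ m, 0 ≤ u - resid u m := fun m => sub_nonneg.2 (hrle m)
  have hsu : ∀ m, u - resid u m ≤ u := fun m => sub_le_self _ (resid_nonneg hu m)
  obtain ⟨w, hw⟩ := kb hrefl hocn u _ hmono hs0 hsu
  have hcnorm : Tendsto (fun m => ‖c m‖) atTop (𝓝 0) := by
    have h2 : Tendsto (fun m => ‖w - (u - resid u (m + 1))‖ + ‖w - (u - resid u m)‖)
        atTop (𝓝 0) := by
      have := (hw.comp (tendsto_add_atTop_nat 1)).add hw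
      simpa using this
    apply squeeze_zero (fun m => norm_nonneg _) (fun m => ?_) h2
    have h1 : c m = (w - (u - resid u m)) - (w - (u - resid u (m + 1))) := by
      rw [hres]; abel
    rw [h1]
    exact (norm_sub_le _ _).trans (by rw [add_comm])
  have hsig : Tendsto (fun m => sigmaA (resid u m)) atTop (𝓝 0) := by
    apply squeeze_zero (fun m => sigmaA_nonneg (resid_nonneg hu m))
      (fun m => (cfun_spec (resid_nonneg hu m)).2.2.1)
    have := hcnorm.const_mul 2
    simpa using this
  have hglb : IsGLB (Set.range (resid u)) 0 := by
    constructor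
    · rintro z ⟨m, rfl⟩
      exact resid_nonneg hu m
    · intro b hb
      by_contra hb0
      have hbp : 0 < b⁺ := by
        rcases (posPart_nonneg b).lt_or_eq with h | h
        · exact h
        · exact absurd (posPart_eq_zero.1 h.symm) hb0
      obtain ⟨a, hA, ha⟩ := hatomic _ hbp
      have hale : ∀ m, a ≤ resid u m := fun m => by
        refine ha.trans ?_
        rw [posPart_def]
        exact sup_le (hb ⟨m, rfl⟩) (resid_nonneg hu m)
      have h1 : ∀ m, ‖a‖ ≤ sigmaA (resid u m) := fun m =>
        norm_atom_le_sigmaA (resid_nonneg hu m) hA (hale m)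
      have h2 : ‖a‖ ≤ 0 := ge_of_tendsto hsig (Filter.Eventually.of_forall h1)
      exact absurd (norm_pos_iff.2 hA.1.ne') (not_lt.2 h2)
  exact hocn ℕ (resid u) (resid_antitone hu) hglb

lemma inf_sum_le {ι : Type*} (x : E) (hx : 0 ≤ x) (s : Finset ι) (g : ι → E)
    (hg : ∀ i ∈ s, 0 ≤ g i) : x ⊓ (∑ i ∈ s, g i) ≤ ∑ i ∈ s, x ⊓ g i := by
  classical
  induction s using Finset.induction with
  | empty => simpa using inf_le_right
  | insert _ _ hni ih =>
    rename_i j s'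
    rw [Finset.sum_insert hni, Finset.sum_insert hni]
    have h1 : x ⊓ (g j + ∑ i ∈ s', g i) ≤ x ⊓ g j + x ⊓ (∑ i ∈ s', g i) :=
      inf_add_le₃ x _ _ hx (hg j (Finset.mem_insert_self j s'))
        (Finset.sum_nonneg fun i hi => hg i (Finset.mem_insert_of_mem hi))
    exact h1.trans (add_le_add_right (ih fun i hi => hg i (Finset.mem_insert_of_mem hi)) _)

lemma key (hrefl : Function.Surjective (NormedSpace.inclusionInDoubleDual ℝ E))
    (hocn : OrderContinuousNorm E) (hatomic : IsAtomicLattice E) (u : E) (hu : 0 ≤ u)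
    (y : ℕ → E) (hy0 : ∀ n, 0 ≤ y n) (hyu : ∀ n, y n ≤ u)
    (hcomp : ∀ a : E, IsLatticeAtom a → Tendsto (fun n => comp a (y n)) atTop (𝓝 0)) :
    Tendsto (fun n => ‖y n‖) atTop (𝓝 0) := by
  rw [Metric.tendsto_atTop]
  intro ε hε
  obtain ⟨m, hm⟩ : ∃ m, ‖resid u m‖ < ε / 2 := by
    obtain ⟨N, hN⟩ := Metric.tendsto_atTop.1 (approx hrefl hocn hatomic u hu) (ε / 2)
      (by linarith)
    refine ⟨N, ?_⟩
    have := hN N le_rfl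
    rwa [Real.dist_eq, sub_zero, abs_of_nonneg (norm_nonneg _)] at this
  set c : ℕ → E := fun i => cfun (resid u i) with hcdef
  have hc0 : ∀ i, 0 ≤ c i := fun i => (cfun_spec (resid_nonneg hu i)).1
  have hbound : ∀ n, ‖y n‖ ≤ (∑ i ∈ Finset.range m, ‖y n ⊓ c i‖) + ‖resid u m‖ := by
    intro n
    have hu_eq : u = (∑ i ∈ Finset.range m, c i) + resid u m := by
      have := resid_sum (u := u) m
      rw [← this]; abel
    have hsplit : y n ≤ (∑ i ∈ Finset.range m, y n ⊓ c i) + y n ⊓ resid u m := by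
      have h1 : y n = y n ⊓ u := (inf_eq_left.2 (hyu n)).symm
      calc y n = y n ⊓ ((∑ i ∈ Finset.range m, c i) + resid u m) := by rw [← hu_eq, ← h1]
      _ ≤ y n ⊓ (∑ i ∈ Finset.range m, c i) + y n ⊓ resid u m :=
          inf_add_le₃ _ _ _ (hy0 n)
            (Finset.sum_nonneg fun i _ => hc0 i) (resid_nonneg hu m)
      _ ≤ (∑ i ∈ Finset.range m, y n ⊓ c i) + y n ⊓ resid u m :=
          add_le_add_left (inf_sum_le _ (hy0 n) _ _ fun i _ => hc0 i) _
    have h2 : ‖y n‖ ≤ ‖(∑ i ∈ Finset.range m, y n ⊓ c i) + y n ⊓ resid u m‖ :=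
      norm_le_of_le (hy0 n) hsplit
    have h3 : ‖(∑ i ∈ Finset.range m, y n ⊓ c i) + y n ⊓ resid u m‖ ≤
        (∑ i ∈ Finset.range m, ‖y n ⊓ c i‖) + ‖y n ⊓ resid u m‖ :=
      (norm_add_le _ _).trans (add_le_add_left (norm_sum_le _ _) _)
    have h4 : ‖y n ⊓ resid u m‖ ≤ ‖resid u m‖ :=
      norm_le_of_le (le_inf (hy0 n) (resid_nonneg hu m)) inf_le_right
    linarith
  have hsum : Tendsto (fun n => ∑ i ∈ Finset.range m, ‖y n ⊓ c i‖) atTop (𝓝 0) := by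
    have hterm : ∀ i ∈ Finset.range m, Tendsto (fun n => ‖y n ⊓ c i‖) atTop (𝓝 0) := by
      intro i _
      rcases (cfun_spec (resid_nonneg hu i)).2.2.2 with h0 | ⟨a, t, hA, ht, hceq⟩
      · have heq : (fun n => ‖y n ⊓ c i‖) = fun _ => 0 := by
          funext n
          rw [show c i = 0 from h0, inf_eq_right.2 (hy0 n), norm_zero]
        rw [heq]
        exact tendsto_const_nhds
      · have hlim : Tendsto (fun n => comp a (y n) * ‖a‖) atTop (𝓝 0) := by
          have := (hcomp a hA).mul_const ‖a‖
          simpa using this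
        apply squeeze_zero (fun n => norm_nonneg _) (fun n => ?_) hlim
        have h1 : y n ⊓ c i ≤ comp a (y n) • a := by
          rw [show c i = t • a from hceq]
          exact comp_inf_smul hA (hy0 n) ht
        have h2 : ‖y n ⊓ c i‖ ≤ ‖comp a (y n) • a‖ :=
          norm_le_of_le (le_inf (hy0 n) (hc0 i)) h1
        rw [norm_smul, Real.norm_eq_abs, abs_of_nonneg (comp_nonneg hA.1 (hy0 n))] at h2
        exact h2
    have := tendsto_finset_sum (Finset.range m) hterm
    simpa using this
  obtain ⟨N, hN⟩ := Metric.tendsto_atTop.1 hsum (ε / 2) (by linarith)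
  refine ⟨N, fun n hn => ?_⟩
  have h1 := hN n hn
  rw [Real.dist_eq, sub_zero] at h1 ⊢
  have h2 : ∑ i ∈ Finset.range m, ‖y n ⊓ c i‖ < ε / 2 := (le_abs_self _).trans_lt h1
  have h3 := hbound n
  rw [abs_of_nonneg (norm_nonneg _)]
  linarith

end Greedy

section Main

variable {E : Type*} [NormedAddCommGroup E] [Lattice E] [HasSolidNorm E] [IsOrderedAddMonoid E] [NormedSpace ℝ E]

lemma uaw_to_un (hrefl : Function.Surjective (NormedSpace.inclusionInDoubleDual ℝ E))
    (hocn : OrderContinuousNorm E) (hatomic : IsAtomicLattice E)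
    (x : ℕ → E) (hx : UawNullSeq x) : UnNullSeq x := by
  intro v hv
  apply key hrefl hocn hatomic v hv (fun n => |x n| ⊓ v)
    (fun n => le_inf (abs_nonneg _) hv) (fun n => inf_le_right)
  intro a hA
  have hna : 0 < ‖a‖ := norm_pos_iff.2 hA.1.ne'
  set t₀ : ℝ := ‖v‖ / ‖a‖ + 1 with ht₀def
  have ht₀ : 0 < t₀ := by positivity
  have hu' : (0 : E) ≤ t₀ • a := smul_nonneg' ht₀.le hA.1.le
  obtain ⟨f, hf1, hf2⟩ := exists_dual_vector ℝ a (norm_ne_zero_iff.2 hA.1.ne')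
  have hz := hx (t₀ • a) hu' f
  have hs : ∀ n, ∃ s, 0 ≤ s ∧ s ≤ t₀ ∧ |x n| ⊓ t₀ • a = s • a := fun n =>
    atom_le_smul hA ht₀.le (le_inf (abs_nonneg _) hu') inf_le_right
  choose s hs0 hst hseq using hs
  have hfs : ∀ n, f (|x n| ⊓ t₀ • a) = s n * ‖a‖ := fun n => by
    rw [hseq n, map_smul, smul_eq_mul, hf2]
    norm_num
  have hslim : Tendsto s atTop (𝓝 0) := by
    have h1 : Tendsto (fun n => s n * ‖a‖) atTop (𝓝 0) := by
      have : (fun n => s n * ‖a‖) = fun n => f (|x n| ⊓ t₀ • a) := by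
        funext n; rw [hfs n]
      rw [this]; exact hz
    have h2 := h1.mul_const ‖a‖⁻¹
    have h3 : (fun n => s n * ‖a‖ * ‖a‖⁻¹) = s := by
      funext n; field_simp
    rw [h3] at h2
    simpa using h2
  have hinfn : ∀ n, (0 : E) ≤ |x n| ⊓ v := fun n => le_inf (abs_nonneg _) hv
  apply squeeze_zero (fun n => comp_nonneg hA.1 (hinfn n)) (fun n => ?_) hslim
  have h1 : comp a (|x n| ⊓ v) • a ≤ |x n| :=
    (comp_smul_le hA.1 (hinfn n)).trans inf_le_left
  have h2 : comp a (|x n| ⊓ v) ≤ t₀ := by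
    have h3 : comp a (|x n| ⊓ v) ≤ ‖|x n| ⊓ v‖ / ‖a‖ := comp_le_norm hA.1 (hinfn n)
    have h4 : ‖|x n| ⊓ v‖ ≤ ‖v‖ := norm_le_of_le (hinfn n) inf_le_right
    have h5 : ‖|x n| ⊓ v‖ / ‖a‖ ≤ ‖v‖ / ‖a‖ := by gcongr
    rw [ht₀def]
    linarith
  have h3 : comp a (|x n| ⊓ v) • a ≤ |x n| ⊓ t₀ • a :=
    le_inf h1 (smul_le_smul_right' h2 hA.1.le)
  rw [hseq n] at h3
  exact scalar_le_of_smul_le hA.1 h3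

lemma weak_to_un (hrefl : Function.Surjective (NormedSpace.inclusionInDoubleDual ℝ E))
    (hocn : OrderContinuousNorm E) (hatomic : IsAtomicLattice E)
    (x : ℕ → E) (hx : WeaklyNullSeq x) : UnNullSeq x := by
  intro v hv
  apply key hrefl hocn hatomic v hv (fun n => |x n| ⊓ v)
    (fun n => le_inf (abs_nonneg _) hv) (fun n => inf_le_right)
  intro a hA
  have hinfn : ∀ n, (0 : E) ≤ |x n| ⊓ v := fun n => le_inf (abs_nonneg _) hv
  have hf := hx (atomDual hA)
  have hlim : Tendsto (fun n => |atomFn a (x n)|) atTop (𝓝 0) := by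
    have := hf.abs
    simpa [atomDual_apply] using this
  apply squeeze_zero (fun n => comp_nonneg hA.1 (hinfn n)) (fun n => ?_) hlim
  have h1 : comp a (|x n| ⊓ v) ≤ comp a |x n| := comp_mono hA.1 (hinfn n) inf_le_left
  have h2 : comp a |x n| = comp a (x n)⁺ + comp a (x n)⁻ := by
    rw [← posPart_add_negPart (x n)]
    exact comp_add hA (posPart_nonneg _) (negPart_nonneg _)
  have h3 : comp a (x n)⁺ + comp a (x n)⁻ = |comp a (x n)⁺ - comp a (x n)⁻| := by
    have hp := comp_nonneg hA.1 (posPart_nonneg (x n))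
    have hn := comp_nonneg hA.1 (negPart_nonneg (x n))
    rcases comp_part_eq_zero hA (x n) with h | h <;> rw [h]
    · rw [zero_add, zero_sub, abs_neg, abs_of_nonneg hn]
    · rw [add_zero, sub_zero, abs_of_nonneg hp]
  calc comp a (|x n| ⊓ v) ≤ comp a |x n| := h1
  _ = |comp a (x n)⁺ - comp a (x n)⁻| := by rw [h2, h3]
  _ = |atomFn a (x n)| := rfl

lemma weak_bounded (x : ℕ → E) [CompleteSpace E] (hx : WeaklyNullSeq x) :
    ∃ C : ℝ, ∀ n, ‖x n‖ ≤ C := by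
  have hpt : ∀ f : StrongDual ℝ E, ∃ C, ∀ n : ℕ,
      ‖(NormedSpace.inclusionInDoubleDual ℝ E (x n)) f‖ ≤ C := by
    intro f
    obtain ⟨N, hN⟩ := Metric.tendsto_atTop.1 (hx f) 1 one_pos
    refine ⟨(Finset.range (N + 1)).sup' (by simp) (fun i => |f (x i)|) + 1, fun n => ?_⟩
    have hup : ∀ i ≤ N, |f (x i)| ≤ (Finset.range (N + 1)).sup' (by simp) fun i => |f (x i)| :=
      fun i hi => Finset.le_sup' (fun j => |f (x j)|) (Finset.mem_range.2 (Nat.lt_succ_of_le hi))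
    have hsup0 : (0:ℝ) ≤ (Finset.range (N + 1)).sup' (by simp) fun i => |f (x i)| :=
      le_trans (abs_nonneg _) (hup 0 (Nat.zero_le N))
    have heq : ‖(NormedSpace.inclusionInDoubleDual ℝ E (x n)) f‖ = |f (x n)| := by
      rw [NormedSpace.dual_def, Real.norm_eq_abs]
    rw [heq]
    rcases le_or_gt n N with h | h
    · linarith [hup n h]
    · have := hN n h.le
      rw [Real.dist_eq, sub_zero] at this
      linarith
  obtain ⟨C, hC⟩ := banach_steinhaus hpt
  refine ⟨C, fun n => ?_⟩
  rcases eq_or_ne (x n) 0 with h | h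
  · rw [h, norm_zero]
    exact le_trans (norm_nonneg _) (hC n)
  · obtain ⟨g, hg1, hg2⟩ := exists_dual_vector ℝ (x n) (norm_ne_zero_iff.2 h)
    calc ‖x n‖ = g (x n) := hg2.symm
    _ ≤ ‖(NormedSpace.inclusionInDoubleDual ℝ E (x n)) g‖ := by
        rw [NormedSpace.dual_def, Real.norm_eq_abs]; exact le_abs_self _
    _ ≤ ‖NormedSpace.inclusionInDoubleDual ℝ E (x n)‖ * ‖g‖ :=
        (NormedSpace.inclusionInDoubleDual ℝ E (x n)).le_opNorm g
    _ ≤ C := by rw [hg1, mul_one]; exact hC n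

end Main

section StrongUnit

variable {F : Type*} [NormedAddCommGroup F] [Lattice F] [HasSolidNorm F] [IsOrderedAddMonoid F] [NormedSpace ℝ F] [CompleteSpace F]

lemma continuous_abs' : Continuous fun y : F => |y| := by
  have h : (fun y : F => |y|) = fun y => y⁺ + y⁻ := by
    funext y; rw [posPart_add_negPart]
  rw [h]
  exact continuous_posPart.add continuous_negPart

lemma strong_unit_bound (hF : HasStrongOrderUnit F) {z : ℕ → F} {C : ℝ}
    (hz : ∀ n, ‖z n‖ ≤ C) : ∃ v : F, 0 ≤ v ∧ ∀ n, |z n| ≤ v := by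
  obtain ⟨e, he0, he⟩ := hF
  have hclosed : ∀ k : ℕ, IsClosed {y : F | |y| ≤ k • e} := fun k => by
    have : {y : F | |y| ≤ k • e} = (fun y : F => (k • e : F) - |y|) ⁻¹' {w : F | 0 ≤ w} := by
      ext y; simp [sub_nonneg]
    rw [this]
    exact IsClosed.preimage (continuous_const.sub continuous_abs') isClosed_nonneg
  have hcover : (⋃ k : ℕ, {y : F | |y| ≤ k • e}) = Set.univ := by
    ext y
    simp only [Set.mem_iUnion, Set.mem_setOf_eq, Set.mem_univ, iff_true]
    exact he y
  obtain ⟨N, hN⟩ := nonempty_interior_of_iUnion_of_closed hclosed hcover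
  obtain ⟨y₀, hy₀⟩ := hN
  obtain ⟨r, hr, hball⟩ := Metric.isOpen_iff.1 isOpen_interior y₀ hy₀
  have hsub : Metric.ball y₀ r ⊆ {y : F | |y| ≤ N • e} := hball.trans interior_subset
  have hsmall : ∀ w : F, ‖w‖ < r → |w| ≤ (2 * N) • e := by
    intro w hw
    have h1 : y₀ + w ∈ Metric.ball y₀ r := by
      rw [Metric.mem_ball, dist_eq_norm]
      simpa using hw
    have h2 : |y₀ + w| ≤ N • e := hsub h1
    have h3 : |y₀| ≤ N • e := hsub (Metric.mem_ball_self hr)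
    have h4 : |w| ≤ |y₀ + w| + |y₀| := by
      have h5 := abs_add_le (y₀ + w) (-y₀)
      have h6 : (y₀ + w) + (-y₀) = w := by abel
      rwa [h6, abs_neg] at h5
    calc |w| ≤ N • e + N • e := h4.trans (add_le_add h2 h3)
    _ = (2 * N) • e := by rw [two_mul, add_nsmul]
  have hKe : ((2 * N : ℕ) : ℝ) • e = (2 * N) • e := Nat.cast_smul_eq_nsmul ℝ _ _
  set D : ℝ := max C 1 with hD
  have hD0 : 0 < D := lt_of_lt_of_le zero_lt_one (le_max_right C 1)
  refine ⟨(((2 * N : ℕ) : ℝ) * (2 * D / r)) • e,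
    smul_nonneg' (by positivity) he0, fun n => ?_⟩
  rcases eq_or_ne (z n) 0 with h | h
  · rw [h, abs_zero]
    exact smul_nonneg' (by positivity) he0
  · have hzn : 0 < ‖z n‖ := norm_pos_iff.2 h
    set t : ℝ := r / (2 * ‖z n‖) with htdef
    have ht : 0 < t := by positivity
    have h1 : ‖t • z n‖ < r := by
      have he1 : t * ‖z n‖ = r / 2 := by
        rw [htdef]; field_simp
      rw [norm_smul, Real.norm_eq_abs, abs_of_nonneg ht.le, he1]
      linarith
    have h2 : |t • z n| ≤ (2 * N) • e := hsmall _ h1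
    have h3 : t • |z n| ≤ (2 * N) • e := by rwa [abs_smul' ht.le] at h2
    have h4 : |z n| ≤ (t⁻¹ * ((2 * N : ℕ) : ℝ)) • e := by
      have h5 := smul_le_smul_left' (inv_nonneg.2 ht.le) h3
      rw [inv_smul_smul₀ ht.ne'] at h5
      rw [← hKe, ← mul_smul] at h5
      exact h5
    refine h4.trans (smul_le_smul_right' ?_ he0)
    have h6 : t⁻¹ = 2 * ‖z n‖ / r := by rw [htdef]; field_simp
    have h7 : t⁻¹ ≤ 2 * D / r := by
      rw [h6]
      have : ‖z n‖ ≤ D := (hz n).trans (le_max_left C 1)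
      gcongr
    have hK0 : (0:ℝ) ≤ ((2 * N : ℕ) : ℝ) := Nat.cast_nonneg _
    have ht0 : 0 ≤ t⁻¹ := inv_nonneg.2 ht.le
    nlinarith [h7, hK0, ht0]

end StrongUnit

end DPAux

/-- if `E` is a reflexive atomic Banach lattice with order continuous norm,
`F` has a strong order unit and `T` is σ-un-continuous, then `T` is Dunford-Pettis iff
`T` is σ-unbounded Dunford-Pettis. -/
theorem dunfordPettis_iff_sigmaUDP_of_reflexive_atomic
    {E F : Type*} [NormedAddCommGroup E] [Lattice E] [HasSolidNorm E] [IsOrderedAddMonoid E] [NormedSpace ℝ E] [CompleteSpace E]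
    [NormedAddCommGroup F] [Lattice F] [HasSolidNorm F] [IsOrderedAddMonoid F] [NormedSpace ℝ F] [CompleteSpace F]
    (hrefl : Function.Surjective (NormedSpace.inclusionInDoubleDual ℝ E))
    (hatomic : IsAtomicLattice E) (hocn : OrderContinuousNorm E)
    (hF : HasStrongOrderUnit F)
    (T : E →L[ℝ] F)
    (hun : ∀ x : ℕ → E, UnNullSeq x → UnNullSeq fun n => T (x n)) :
    DunfordPettis T ↔ SigmaUDP T := by
  constructor
  · intro _ x _ huaw
    exact hun x (DPAux.uaw_to_un hrefl hocn hatomic x huaw)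
  · intro _ x hweak
    obtain ⟨C, hC⟩ := DPAux.weak_bounded x hweak
    have hTx : UnNullSeq fun n => T (x n) := hun x (DPAux.weak_to_un hrefl hocn hatomic x hweak)
    have hTb : ∀ n, ‖T (x n)‖ ≤ ‖T‖ * C := fun n =>
      (T.le_opNorm (x n)).trans (mul_le_mul_of_nonneg_left (hC n) (norm_nonneg T))
    obtain ⟨v, hv0, hv⟩ := DPAux.strong_unit_bound hF hTb
    have h1 := hTx v hv0
    have h2 : (fun n => ‖|T (x n)| ⊓ v‖) = fun n => ‖T (x n)‖ := by
      funext n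
      rw [inf_eq_left.2 (hv n), norm_abs_eq_norm]
    rwa [h2] at h1
end

section
/- Let E and F be Banach lattices and suppose F has a strong order unit. If T : E → F is a σ-unbounded Dunford-Pettis operator, then T is M-weakly compact. -/
open Filter Topology

section AuxLattice
variable {F : Type*} [NormedAddCommGroup F] [Lattice F] [HasSolidNorm F] [IsOrderedAddMonoid F]

private lemma aux_abs_add (a b : F) : |a + b| ≤ |a| + |b| :=
  abs_le'.2 ⟨add_le_add (le_abs_self a) (le_abs_self b),
    by rw [neg_add]; exact add_le_add (neg_le_abs a) (neg_le_abs b)⟩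

private lemma aux_inf_add_eq_zero {x y z : F} (hx : 0 ≤ x) (hy : 0 ≤ y) (hz : 0 ≤ z)
    (hxy : x ⊓ y = 0) (hxz : x ⊓ z = 0) : x ⊓ (y + z) = 0 := by
  refine le_antisymm ?_ (le_inf hx (add_nonneg hy hz))
  have hd : x ⊓ (y + z) - y ≤ 0 := by
    have h1 : (x ⊓ (y + z) - y) ⊔ 0 ≤ x ⊓ z := by
      refine sup_le (le_inf ?_ ?_) (le_inf hx hz)
      · exact le_trans (sub_le_sub_right inf_le_left y) (sub_le_self x hy)
      · exact sub_le_iff_le_add'.2 inf_le_right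
    have h2 := h1.trans_eq hxz
    exact le_trans le_sup_left h2
  have h2 : x ⊓ (y + z) ≤ y := sub_nonpos.1 hd
  calc x ⊓ (y + z) ≤ x ⊓ y := le_inf inf_le_left h2
    _ = 0 := hxy

private lemma aux_sum_disjoint {u : F} (hu : 0 ≤ u) (w : ℕ → F) (h0 : ∀ n, 0 ≤ w n)
    (hwu : ∀ n, w n ≤ u) (hd : ∀ i j, i ≠ j → w i ⊓ w j = 0) (s : Finset ℕ) :
    (0 ≤ ∑ n ∈ s, w n) ∧ (∑ n ∈ s, w n ≤ u) ∧ ∀ m ∉ s, w m ⊓ ∑ n ∈ s, w n = 0 := by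
  classical
  induction s using Finset.induction_on with
  | empty =>
    refine ⟨le_rfl, by simpa using hu, fun m _ => by simpa using inf_eq_right.2 (h0 m)⟩
  | @insert a s ha ih =>
    obtain ⟨hS0, hSu, hSd⟩ := ih
    have hsum : ∑ n ∈ insert a s, w n = w a + ∑ n ∈ s, w n := Finset.sum_insert ha
    have hda : w a ⊓ ∑ n ∈ s, w n = 0 := hSd a ha
    refine ⟨?_, ?_, ?_⟩
    · rw [hsum]; exact add_nonneg (h0 a) hS0
    · rw [hsum, ← inf_add_sup (w a) (∑ n ∈ s, w n), hda, zero_add]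
      exact sup_le (hwu a) hSu
    · intro m hm
      rw [Finset.mem_insert, not_or] at hm
      rw [hsum]
      exact aux_inf_add_eq_zero (h0 m) (h0 a) hS0 (hd m a hm.1) (hSd m hm.2)

private lemma aux_tendsto_zero [NormedSpace ℝ F] {u : F} (hu : 0 ≤ u) (w : ℕ → F)
    (h0 : ∀ n, 0 ≤ w n) (hwu : ∀ n, w n ≤ u) (hd : ∀ i j, i ≠ j → w i ⊓ w j = 0)
    (f : F →L[ℝ] ℝ) : Tendsto (fun n => f (w n)) atTop (𝓝 0) := by
  classical
  have key : ∀ t : Finset ℕ, |f (∑ n ∈ t, w n)| ≤ ‖f‖ * ‖u‖ := by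
    intro t
    obtain ⟨ht0, htu, -⟩ := aux_sum_disjoint hu w h0 hwu hd t
    calc |f (∑ n ∈ t, w n)| ≤ ‖f‖ * ‖∑ n ∈ t, w n‖ := by
          simpa [Real.norm_eq_abs] using f.le_opNorm (∑ n ∈ t, w n)
      _ ≤ ‖f‖ * ‖u‖ := by
          gcongr
          exact HasSolidNorm.solid (by rwa [abs_of_nonneg ht0, abs_of_nonneg hu])
  have hsum : Summable (fun n => |f (w n)|) := by
    refine summable_of_sum_le (c := ‖f‖ * ‖u‖ + ‖f‖ * ‖u‖) (fun n => abs_nonneg _) ?_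
    intro t
    rw [← Finset.sum_filter_add_sum_filter_not t (fun n => 0 ≤ f (w n))]
    have h1 : ∑ n ∈ t.filter (fun n => 0 ≤ f (w n)), |f (w n)| ≤ ‖f‖ * ‖u‖ := by
      have e1 : ∑ n ∈ t.filter (fun n => 0 ≤ f (w n)), |f (w n)|
          = f (∑ n ∈ t.filter (fun n => 0 ≤ f (w n)), w n) := by
        rw [map_sum]
        exact Finset.sum_congr rfl fun n hn => abs_of_nonneg (Finset.mem_filter.1 hn).2
      rw [e1]
      exact (le_abs_self _).trans (key _)
    have h2 : ∑ n ∈ t.filter (fun n => ¬ 0 ≤ f (w n)), |f (w n)| ≤ ‖f‖ * ‖u‖ := by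
      have e2 : ∑ n ∈ t.filter (fun n => ¬ 0 ≤ f (w n)), |f (w n)|
          = -(f (∑ n ∈ t.filter (fun n => ¬ 0 ≤ f (w n)), w n)) := by
        rw [map_sum, ← Finset.sum_neg_distrib]
        exact Finset.sum_congr rfl fun n hn =>
          abs_of_neg (lt_of_not_ge (Finset.mem_filter.1 hn).2)
      rw [e2]
      exact (neg_le_abs _).trans (key _)
    exact add_le_add h1 h2
  have := (summable_abs_iff.1 hsum).tendsto_atTop_zero
  exact this

end AuxLattice

section AuxSmul
variable {F : Type*} [NormedAddCommGroup F] [Lattice F] [HasSolidNorm F] [IsOrderedAddMonoid F] [NormedSpace ℝ F]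

private lemma aux_dyadic_smul_nonneg (p k : ℕ) {v : F} (hv : 0 ≤ v) :
    0 ≤ ((p : ℝ) / 2 ^ k) • v := by
  induction k with
  | zero =>
    simp only [pow_zero, div_one]
    rw [Nat.cast_smul_eq_nsmul]
    exact nsmul_nonneg hv p
  | succ k ih =>
    apply nsmul_two_semiclosed
    have h2 : (2 : ℕ) • (((p : ℝ) / 2 ^ (k + 1)) • v) = ((p : ℝ) / 2 ^ k) • v := by
      rw [← Nat.cast_smul_eq_nsmul ℝ, smul_smul]
      congr 1
      push_cast
      ring
    rw [h2]
    exact ih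

private lemma aux_smul_nonneg {t : ℝ} (ht : 0 ≤ t) {v : F} (hv : 0 ≤ v) : 0 ≤ t • v := by
  have hseq : Tendsto (fun k : ℕ => ((Nat.floor (t * 2 ^ k) : ℝ) / 2 ^ k)) atTop (𝓝 t) := by
    rw [← tendsto_sub_nhds_zero_iff]
    have hb : ∀ k : ℕ, ‖(Nat.floor (t * 2 ^ k) : ℝ) / 2 ^ k - t‖ ≤ (1 / 2 : ℝ) ^ k := by
      intro k
      have hpow : (0 : ℝ) < 2 ^ k := by positivity
      have h1 : t * 2 ^ k < Nat.floor (t * 2 ^ k) + 1 := Nat.lt_floor_add_one _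
      have h2 : (Nat.floor (t * 2 ^ k) : ℝ) ≤ t * 2 ^ k := Nat.floor_le (by positivity)
      have e1 : (Nat.floor (t * 2 ^ k) : ℝ) / 2 ^ k - t
          = ((Nat.floor (t * 2 ^ k) : ℝ) - t * 2 ^ k) / 2 ^ k := by field_simp
      rw [Real.norm_eq_abs, e1, abs_div, abs_of_pos hpow, one_div, inv_pow, ← one_div,
        div_le_div_iff_of_pos_right hpow]
      rw [abs_le]
      constructor <;> linarith
    have hlim : Tendsto (fun k : ℕ => ((1 / 2 : ℝ)) ^ k) atTop (𝓝 0) :=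
      tendsto_pow_atTop_nhds_zero_of_lt_one (by norm_num) (by norm_num)
    exact squeeze_zero_norm hb hlim
  have h2 : Tendsto (fun k : ℕ => ((Nat.floor (t * 2 ^ k) : ℝ) / 2 ^ k) • v) atTop
      (𝓝 (t • v)) := hseq.smul_const v
  exact ge_of_tendsto h2 (Eventually.of_forall fun k => aux_dyadic_smul_nonneg _ k hv)

private lemma aux_smul_mono {t : ℝ} (ht : 0 ≤ t) {a b : F} (hab : a ≤ b) :
    t • a ≤ t • b := by
  have := aux_smul_nonneg ht (sub_nonneg.2 hab)
  rwa [smul_sub, sub_nonneg] at this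

private lemma aux_smul_mono_scalar {s t : ℝ} (hst : s ≤ t) {e : F} (he : 0 ≤ e) :
    s • e ≤ t • e := by
  have := aux_smul_nonneg (sub_nonneg.2 hst) he
  rwa [sub_smul, sub_nonneg] at this

private lemma aux_abs_smul_le {t : ℝ} (ht : 0 ≤ t) (z : F) : |t • z| ≤ t • |z| :=
  abs_le'.2 ⟨aux_smul_mono ht (le_abs_self z),
    by rw [← smul_neg]; exact aux_smul_mono ht (neg_le_abs z)⟩

private lemma aux_unit_bound [CompleteSpace F] {e : F} (he0 : 0 ≤ e)
    (he : ∀ y : F, ∃ n : ℕ, |y| ≤ n • e) :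
    ∃ c : ℝ, 0 ≤ c ∧ ∀ y : F, |y| ≤ (c * (‖y‖ + 1)) • e := by
  have habs : Continuous fun y : F => |y| := by
    have : Continuous fun y : F => y ⊔ -y := continuous_id.sup continuous_neg
    simpa [abs] using this
  have hclosed : ∀ n : ℕ, IsClosed {y : F | |y| ≤ n • e} :=
    fun n => isClosed_le habs continuous_const
  have hunion : ⋃ n : ℕ, {y : F | |y| ≤ n • e} = Set.univ := by
    refine Set.eq_univ_iff_forall.2 fun y => ?_
    obtain ⟨n, hn⟩ := he y
    exact Set.mem_iUnion.2 ⟨n, hn⟩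
  obtain ⟨n, y0, hy0⟩ := nonempty_interior_of_iUnion_of_closed hclosed hunion
  obtain ⟨ε, hε, hball⟩ := Metric.mem_nhds_iff.1 (mem_interior_iff_mem_nhds.1 hy0)
  have hsub : Metric.ball y0 ε ⊆ {y : F | |y| ≤ n • e} := hball
  have hz : ∀ z : F, ‖z‖ < ε → |z| ≤ (2 * n) • e := by
    intro z hznorm
    have h1 : |y0| ≤ n • e := hsub (Metric.mem_ball_self hε)
    have h2 : |y0 + z| ≤ n • e := hsub (by
      simp only [Metric.mem_ball, dist_eq_norm, add_sub_cancel_left]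
      exact hznorm)
    have h3 : |z| ≤ |y0 + z| + |y0| := by
      have := aux_abs_add (y0 + z) (-y0)
      simpa [abs_neg] using this
    calc |z| ≤ n • e + n • e := h3.trans (add_le_add h2 h1)
      _ = (2 * n) • e := by rw [two_mul, add_nsmul]
  refine ⟨2 * (2 * n) / ε, by positivity, fun y => ?_⟩
  set t : ℝ := ε / (2 * (‖y‖ + 1)) with ht_def
  have hy1 : (0 : ℝ) < ‖y‖ + 1 := by positivity
  have ht : 0 < t := by positivity
  have hzn : ‖t • y‖ < ε := by
    rw [norm_smul, Real.norm_eq_abs, abs_of_pos ht]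
    calc t * ‖y‖ ≤ t * (‖y‖ + 1) := by nlinarith
      _ = ε / 2 := by rw [ht_def]; field_simp
      _ < ε := by linarith
  have h4 : |t • y| ≤ (2 * n) • e := hz _ hzn
  have h5 : |y| ≤ t⁻¹ • |t • y| := by
    have : y = t⁻¹ • (t • y) := by rw [smul_smul, inv_mul_cancel₀ (ne_of_gt ht), one_smul]
    calc |y| = |t⁻¹ • (t • y)| := by rw [← this]
      _ ≤ t⁻¹ • |t • y| := aux_abs_smul_le (by positivity) _
  have h6 : t⁻¹ • |t • y| ≤ t⁻¹ • ((2 * n) • e) := aux_smul_mono (by positivity) h4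
  have h7 : t⁻¹ • ((2 * n : ℕ) • e) = (2 * (2 * n) / ε * (‖y‖ + 1)) • e := by
    rw [← Nat.cast_smul_eq_nsmul ℝ, smul_smul]
    congr 1
    rw [ht_def]
    push_cast
    field_simp
  exact h5.trans (h6.trans_eq h7)

end AuxSmul

/-- if `F` has a strong order unit, then every σ-uDP operator `T : E → F`
is M-weakly compact. -/
theorem sigmaUDP_MWeaklyCompact_of_strongOrderUnit
    {E F : Type*} [NormedAddCommGroup E] [Lattice E] [HasSolidNorm E] [IsOrderedAddMonoid E] [NormedSpace ℝ E] [CompleteSpace E]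
    [NormedAddCommGroup F] [Lattice F] [HasSolidNorm F] [IsOrderedAddMonoid F] [NormedSpace ℝ F] [CompleteSpace F]
    (hF : HasStrongOrderUnit F)
    (T : E →L[ℝ] F) (hT : SigmaUDP T) : MWeaklyCompact T := by
  obtain ⟨e, he0, he⟩ := hF
  obtain ⟨c, hc0, hc⟩ := aux_unit_bound he0 he
  intro x hxbdd hdisj
  obtain ⟨C, hC⟩ := hxbdd
  have hC0 : 0 ≤ C := le_trans (norm_nonneg (x 0)) (hC 0)
  have huaw : UawNullSeq x := by
    intro u hu f
    refine aux_tendsto_zero hu (fun n => |x n| ⊓ u)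
      (fun n => le_inf (abs_nonneg _) hu) (fun n => inf_le_right) ?_ f
    intro i j hij
    refine le_antisymm ?_ (le_inf (le_inf (abs_nonneg _) hu) (le_inf (abs_nonneg _) hu))
    exact (inf_le_inf inf_le_left inf_le_left).trans_eq (hdisj i j hij)
  have hun := hT x ⟨C, hC⟩ huaw
  set M : ℝ := c * (‖T‖ * C + 1) with hM_def
  have hM0 : 0 ≤ M := mul_nonneg hc0 (by positivity)
  have hv : 0 ≤ M • e := aux_smul_nonneg hM0 he0
  have hbound : ∀ n, |T (x n)| ≤ M • e := by
    intro n
    refine (hc (T (x n))).trans (aux_smul_mono_scalar ?_ he0)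
    have h1 : ‖T (x n)‖ ≤ ‖T‖ * C :=
      (T.le_opNorm (x n)).trans (mul_le_mul_of_nonneg_left (hC n) (norm_nonneg T))
    have h2 : ‖T (x n)‖ + 1 ≤ ‖T‖ * C + 1 := by linarith
    exact mul_le_mul_of_nonneg_left h2 hc0
  have heq : ∀ n, ‖T (x n)‖ = ‖|T (x n)| ⊓ (M • e)‖ := by
    intro n
    rw [inf_eq_left.2 (hbound n), norm_abs_eq_norm]
  exact (hun (M • e) hv).congr fun n => (heq n).symm
end
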